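/- arXiv:2109.12285 — 8 statements merged into one kernel-verified Lean document; each statement's English description precedes it below -/
import Mathlib

section
/- For every compact set G ⊆ ℝⁿ of positive Lebesgue measure, the surface regularity satisfies s(G) ≤ 1. -/
open MeasureTheory Metric Filter Set Pointwise

/-- The surface regularity of a set `G`:
`s(G) = sup { s ≥ 0 : ∃ C > 0, |G_ε| − |G| ≤ C ε^s for all ε ∈ (0,1] }`. -/
noncomputable def surfReg {E : Type*} [PseudoMetricSpace E] [MeasureSpace E] (G : Set E) : ℝ :=
  sSup {s : ℝ | 0 ≤ s ∧ ∃ C : ℝ, 0 < C ∧ ∀ ε : ℝ, 0 < ε → ε ≤ 1 →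
    (volume (cthickening ε G)).toReal - (volume G).toReal ≤ C * ε ^ s}

/-- The L¹-Hölder regularity of a set `G`:
`α(G) = sup { α ≥ 0 : ∃ C > 0, |(G+h) Δ G| ≤ C ‖h‖^α for all h }`. -/
noncomputable def holderReg {E : Type*} [NormedAddCommGroup E] [MeasureSpace E] (G : Set E) : ℝ :=
  sSup {α : ℝ | 0 ≤ α ∧ ∃ C : ℝ, 0 < C ∧ ∀ h : E,
    (volume (symmDiff ((fun x => x + h) '' G) G)).toReal ≤ C * ‖h‖ ^ α}

/-!
If `‖h‖ = ε`, then `G` and `h +ᵥ G` both lie in `G_ε`, so `|G_ε| - |G| ≥ |(h +ᵥ G) \ G|`.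
Once `k ε > diam G` the translate `k • h +ᵥ G` is disjoint from `G`, while
`(k • h +ᵥ G) \ G` is covered by `k` translates of `(h +ᵥ G) \ G`; choosing `k ≈ diam G / ε`
gives `|G_ε| - |G| ≥ |G| ε / (diam G + 1)`. A lower bound linear in `ε` is incompatible with
`|G_ε| - |G| ≤ C ε^s` for `s > 1` as `ε → 0`.
-/

open Topology

section Translation

variable {G : Type*} [AddGroup G] [MeasurableSpace G] (μ : Measure G) [μ.IsAddLeftInvariant]

theorem measure_nsmul_vadd_diff_le (s : Set G) (h : G) (k : ℕ) :
    μ ((k • h +ᵥ s) \ s) ≤ k * μ ((h +ᵥ s) \ s) := by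
  induction k with
  | zero => simp
  | succ k ih =>
    have hsub : ((k + 1) • h +ᵥ s) \ s ⊆ (k • h +ᵥ (h +ᵥ s) \ s) ∪ ((k • h +ᵥ s) \ s) := by
      rintro _ ⟨⟨g, hg, rfl⟩, hx⟩
      have hshift : (k + 1) • h +ᵥ g = k • h +ᵥ (h +ᵥ g) := by
        simp only [vadd_eq_add, succ_nsmul, add_assoc]
      simp only [hshift] at hx ⊢
      by_cases hhg : h +ᵥ g ∈ s
      · exact Or.inr ⟨vadd_mem_vadd_set hhg, hx⟩
      · exact Or.inl (vadd_mem_vadd_set ⟨vadd_mem_vadd_set hg, hhg⟩)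
    calc μ (((k + 1) • h +ᵥ s) \ s)
        ≤ μ (k • h +ᵥ (h +ᵥ s) \ s) + μ ((k • h +ᵥ s) \ s) :=
          (measure_mono hsub).trans (measure_union_le _ _)
      _ ≤ μ ((h +ᵥ s) \ s) + k * μ ((h +ᵥ s) \ s) := by
          rw [measure_vadd]; gcongr
      _ = (k + 1 : ℕ) * μ ((h +ᵥ s) \ s) := by push_cast; ring

end Translation

section Normed

variable {E : Type*} [SeminormedAddCommGroup E]

theorem disjoint_vadd_of_diam_lt_norm {s : Set E} (hs : Bornology.IsBounded s) {h : E}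
    (hh : diam s < ‖h‖) : Disjoint (h +ᵥ s) s := by
  rw [Set.disjoint_left]
  rintro _ ⟨g, hg, rfl⟩ hhg
  have : ‖h‖ ≤ diam s := by
    simpa using dist_le_diam_of_mem hs hhg hg
  linarith

theorem vadd_subset_cthickening_norm (s : Set E) (h : E) : h +ᵥ s ⊆ cthickening ‖h‖ s := by
  rintro _ ⟨g, hg, rfl⟩
  exact mem_cthickening_of_dist_le _ g _ s hg (by simp)

variable [MeasurableSpace E] (μ : Measure E)

theorem measure_add_measure_vadd_diff_le {s : Set E} (hs : MeasurableSet s) (h : E) :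
    μ s + μ ((h +ᵥ s) \ s) ≤ μ (cthickening ‖h‖ s) := by
  rw [← measure_union' disjoint_sdiff_right hs, union_sdiff_self]
  exact measure_mono (union_subset (self_subset_cthickening s) (vadd_subset_cthickening_norm s h))

theorem measure_le_mul_measure_vadd_diff [μ.IsAddLeftInvariant] {s : Set E}
    (hs : Bornology.IsBounded s) {h : E} {k : ℕ} (hk : diam s < ‖k • h‖) :
    μ s ≤ k * μ ((h +ᵥ s) \ s) :=
  calc μ s = μ ((k • h +ᵥ s) \ s) := by
        rw [(disjoint_vadd_of_diam_lt_norm hs hk).sdiff_eq_left, measure_vadd]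
    _ ≤ k * μ ((h +ᵥ s) \ s) := measure_nsmul_vadd_diff_le μ s h k

end Normed

section LowerBound

theorem exists_nat_lt_mul_le_add {a ε : ℝ} (ha : 0 ≤ a) (hε : 0 < ε) :
    ∃ k : ℕ, a < k * ε ∧ k * ε ≤ a + ε := by
  refine ⟨⌊a / ε⌋₊ + 1, ?_, ?_⟩
  · rw [← div_lt_iff₀ hε]
    exact_mod_cast Nat.lt_floor_add_one _
  · have := Nat.floor_le (div_nonneg ha hε.le)
    calc ((⌊a / ε⌋₊ + 1 : ℕ) : ℝ) * ε ≤ (a / ε + 1) * ε := by push_cast; gcongr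
      _ = a + ε := by field_simp

variable {E : Type*} [NormedAddCommGroup E] [NormedSpace ℝ E] [Nontrivial E] [ProperSpace E]
  [MeasurableSpace E] [BorelSpace E] (μ : Measure E) [μ.IsAddLeftInvariant]
  [IsFiniteMeasureOnCompacts μ]

theorem measureReal_div_mul_le_measureReal_cthickening_sub {s : Set E} (hs : IsCompact s)
    {ε : ℝ} (hε : 0 < ε) (hε1 : ε ≤ 1) :
    μ.real s / (diam s + 1) * ε ≤ μ.real (cthickening ε s) - μ.real s := by
  obtain ⟨v, hv⟩ := exists_norm_eq E zero_le_one
  set h := ε • v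
  have hh : ‖h‖ = ε := by simp [h, norm_smul, hv, hε.le]
  obtain ⟨k, hk_lt, hk_le⟩ := exists_nat_lt_mul_le_add (diam_nonneg (s := s)) hε
  have hk_norm : ‖k • h‖ = k * ε := by rw [RCLike.norm_nsmul ℝ, hh, nsmul_eq_mul]
  have hsum : μ s + μ ((h +ᵥ s) \ s) ≤ μ (cthickening ε s) :=
    hh ▸ measure_add_measure_vadd_diff_le μ hs.measurableSet h
  have hfin : μ (cthickening ε s) ≠ ⊤ := hs.cthickening.measure_lt_top.ne
  have hs_fin : μ s ≠ ⊤ := ne_top_of_le_ne_top hfin (le_self_add.trans hsum)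
  have hd_fin : μ ((h +ᵥ s) \ s) ≠ ⊤ := ne_top_of_le_ne_top hfin (le_add_self.trans hsum)
  have hsum_real : μ.real s + μ.real ((h +ᵥ s) \ s) ≤ μ.real (cthickening ε s) := by
    simpa [measureReal_def, ENNReal.toReal_add hs_fin hd_fin] using ENNReal.toReal_mono hfin hsum
  have hcover : μ.real s ≤ k * μ.real ((h +ᵥ s) \ s) := by
    simpa [measureReal_def] using ENNReal.toReal_mono (by finiteness)
      (measure_le_mul_measure_vadd_diff μ hs.isBounded (hk_norm ▸ hk_lt))
  have hdiam : 0 < diam s + 1 := by linarith [diam_nonneg (s := s)]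
  have hd : μ.real s / (diam s + 1) * ε ≤ μ.real ((h +ᵥ s) \ s) := by
    rw [div_mul_eq_mul_div, div_le_iff₀ hdiam]
    calc μ.real s * ε ≤ k * μ.real ((h +ᵥ s) \ s) * ε := by gcongr
      _ = k * ε * μ.real ((h +ᵥ s) \ s) := by ring
      _ ≤ (diam s + 1) * μ.real ((h +ᵥ s) \ s) := by gcongr; linarith
      _ = μ.real ((h +ᵥ s) \ s) * (diam s + 1) := mul_comm _ _
  linarith

end LowerBound

theorem le_one_of_forall_mul_le_mul_rpow {c C s : ℝ} (hc : 0 < c)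
    (h : ∀ ε : ℝ, 0 < ε → ε ≤ 1 → c * ε ≤ C * ε ^ s) : s ≤ 1 := by
  by_contra! hs
  have hlim : Tendsto (fun ε : ℝ => C * ε ^ (s - 1)) (𝓝[>] 0) (𝓝 0) := by
    have := ((Real.continuousAt_rpow_const 0 (s - 1) (.inr (by linarith))).const_mul C).tendsto
    simpa [Real.zero_rpow (by linarith : s - 1 ≠ 0)] using this.mono_left nhdsWithin_le_nhds
  have hev : ∀ᶠ ε in 𝓝[>] (0 : ℝ), c ≤ C * ε ^ (s - 1) := by
    filter_upwards [Ioc_mem_nhdsGT zero_lt_one] with ε ⟨hε, hε1⟩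
    rw [Real.rpow_sub_one hε.ne', ← mul_div_assoc, le_div_iff₀ hε]
    exact h ε hε hε1
  linarith [ge_of_tendsto hlim hev]

theorem surfReg_le_one_of_linear_lower_bound {E : Type*} [PseudoMetricSpace E] [MeasureSpace E]
    {G : Set E} {c : ℝ} (hc : 0 < c)
    (h : ∀ ε : ℝ, 0 < ε → ε ≤ 1 → c * ε ≤ volume.real (cthickening ε G) - volume.real G) :
    surfReg G ≤ 1 :=
  Real.sSup_le (fun _ ⟨_, _, _, hC⟩ => le_one_of_forall_mul_le_mul_rpow hc fun ε hε hε1 =>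
    (h ε hε hε1).trans (hC ε hε hε1)) zero_le_one

-- In dimension `0` the defining set is all of `[0, ∞)`, and `sSup` of an unbounded set is `0`.
theorem surfReg_of_subsingleton {E : Type*} [PseudoMetricSpace E] [MeasureSpace E]
    [Subsingleton E] (G : Set E) : surfReg G = 0 := by
  have hG : ∀ ε, cthickening ε G = G := by
    rcases G.eq_empty_or_nonempty with rfl | hne
    · exact cthickening_empty
    · rw [hne.eq_univ]
      exact fun ε => eq_univ_of_univ_subset (self_subset_cthickening _)
  refine Real.sSup_of_not_bddAbove fun hb => not_bddAbove_Ici (a := (0 : ℝ)) (hb.mono fun s hs => ?_)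
  exact ⟨hs, 1, one_pos, fun ε hε _ => by simpa [hG] using Real.rpow_nonneg hε.le s⟩

/-- For every compact set `G ⊆ ℝⁿ` of positive Lebesgue measure, `s(G) ≤ 1`. -/
theorem surfReg_le_one {n : ℕ} (G : Set (EuclideanSpace ℝ (Fin n)))
    (hG : IsCompact G) (hpos : 0 < volume G) : surfReg G ≤ 1 := by
  rcases subsingleton_or_nontrivial (EuclideanSpace ℝ (Fin n)) with _ | _
  · exact (surfReg_of_subsingleton G).trans_le zero_le_one
  · have hG_real : 0 < volume.real G := ENNReal.toReal_pos hpos.ne' hG.measure_lt_top.ne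
    exact surfReg_le_one_of_linear_lower_bound
      (div_pos hG_real (by linarith [diam_nonneg (s := G)]))
      fun ε hε hε1 => measureReal_div_mul_le_measureReal_cthickening_sub volume hG hε hε1
end

section
/- There exists a compact set G ⊂ ℝ which is a tile (its integer translates {G + k : k ∈ ℤ} cover ℝ and any two distinct translates intersect in a set of Lebesgue measure zero) such that α(G) = 1 and s(G) = 1/3. -/
open MeasureTheory Metric Filter Set Pointwise

/-!
The witness is `G = [0,1] ∪ {1} ∪ {1 + 1/√(n+1) : n ∈ ℕ}`. It differs from `[0,1]` by a countable
set, which gives the tiling property and `α(G) = α([0,1]) = 1`.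

The points `1 + 1/√(n+1)` accumulate at `1` with gaps of order `n^(-3/2)`. At scale `ε = δ³`, the
points with `n ≳ δ⁻²` lie in `[1, 1 + δ]`, and the `≲ δ⁻²` others contribute at most `2ε` each,
so `|G_ε| - |G| ≲ δ = ε^(1/3)`. Conversely, when `ε ≈ k^(-3/2)` the first `k` points are
`2ε`-separated and away from `[0,1]`, so their disjoint `ε`-balls add `≈ kε ≈ ε^(1/3)`.
-/

open Topology

theorem le_of_frequently_mul_rpow_le {a b c C : ℝ} (hc : 0 < c)
    (h : ∃ᶠ t in 𝓝[>] (0 : ℝ), c * t ^ a ≤ C * t ^ b) : b ≤ a := by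
  by_contra! hab
  have hlim : Tendsto (fun t : ℝ => C * t ^ (b - a)) (𝓝[>] 0) (𝓝 0) := by
    have hcont := (Real.continuousAt_rpow_const 0 (b - a) (Or.inr (sub_pos.2 hab).le)).tendsto
    rw [Real.zero_rpow (sub_pos.2 hab).ne'] at hcont
    simpa using (hcont.mono_left nhdsWithin_le_nhds).const_mul C
  obtain ⟨t, hle, ht, hsmall⟩ :=
    (h.and_eventually (eventually_mem_nhdsWithin.and (hlim.eventually (gt_mem_nhds hc)))).exists
  have hsplit : C * t ^ b = C * t ^ (b - a) * t ^ a := by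
    rw [mul_assoc, ← Real.rpow_add ht, sub_add_cancel]
  nlinarith [Real.rpow_pos_of_pos ht a]

theorem symmDiff_Icc_Icc_subset {α : Type*} [LinearOrder α] (a b c d : α) :
    symmDiff (Icc a b) (Icc c d) ⊆ uIcc a c ∪ uIcc b d := by
  intro x hx
  simp only [mem_symmDiff, mem_Icc, not_and_or, not_le, mem_union, mem_uIcc] at hx ⊢
  rcases hx with ⟨⟨hax, hxb⟩, hxc | hdx⟩ | ⟨⟨hcx, hxd⟩, hxa | hbx⟩
  · exact Or.inl (Or.inl ⟨hax, hxc.le⟩)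
  · exact Or.inr (Or.inr ⟨hdx.le, hxb⟩)
  · exact Or.inl (Or.inr ⟨hcx, hxa.le⟩)
  · exact Or.inr (Or.inl ⟨hbx.le, hxd⟩)

theorem volume_symmDiff_add_Icc_le (a b h : ℝ) :
    volume (symmDiff ((fun x => x + h) '' Icc a b) (Icc a b)) ≤ ENNReal.ofReal (2 * |h|) := by
  rw [image_add_const_Icc]
  calc _ ≤ volume (uIcc (a + h) a ∪ uIcc (b + h) b) := measure_mono (symmDiff_Icc_Icc_subset ..)
    _ ≤ volume (uIcc (a + h) a) + volume (uIcc (b + h) b) := measure_union_le _ _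
    _ = ENNReal.ofReal (2 * |h|) := by
      rw [Real.volume_interval, Real.volume_interval, show a - (a + h) = -h by ring,
        show b - (b + h) = -h by ring, abs_neg, ← ENNReal.ofReal_add (abs_nonneg _)
        (abs_nonneg _), two_mul]

theorem le_volume_symmDiff_add_Icc {a b h : ℝ} (hh : h ≤ b - a) :
    ENNReal.ofReal h ≤ volume (symmDiff ((fun x => x + h) '' Icc a b) (Icc a b)) := by
  rw [image_add_const_Icc]
  calc ENNReal.ofReal h = volume (Ico a (a + h)) := by rw [Real.volume_Ico, add_sub_cancel_left]
    _ ≤ _ := measure_mono fun x hx =>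
      Or.inr ⟨⟨hx.1, by linarith [hx.2]⟩, fun hx' => (not_le.2 hx.2) hx'.1⟩

theorem ae_eq_image_add_right {E : Type*} [AddGroup E] [MeasurableSpace E] [MeasurableAdd E]
    {μ : Measure E} [μ.IsAddRightInvariant] {s t : Set E} (hst : s =ᵐ[μ] t) (h : E) :
    (fun x => x + h) '' s =ᵐ[μ] (fun x => x + h) '' t := by
  simp only [image_add_right]
  exact (measurePreserving_add_right μ (-h)).quasiMeasurePreserving.preimage_ae_eq hst

theorem holderReg_congr_ae {E : Type*} [NormedAddCommGroup E] [MeasureSpace E] [MeasurableAdd E]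
    [volume.IsAddRightInvariant (G := E)] {s t : Set E} (hst : s =ᵐ[volume] t) :
    holderReg s = holderReg t := by
  have hvol (h : E) : volume (symmDiff ((fun x => x + h) '' s) s) =
      volume (symmDiff ((fun x => x + h) '' t) t) :=
    measure_congr ((ae_eq_image_add_right hst h).symmDiff hst)
  simp only [holderReg, hvol]

theorem holderReg_Icc {a b : ℝ} (hab : a < b) : holderReg (Icc a b) = 1 := by
  refine IsGreatest.csSup_eq ⟨⟨zero_le_one, 2, two_pos, fun h => ?_⟩, ?_⟩
  · rw [Real.norm_eq_abs, Real.rpow_one]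
    exact ENNReal.toReal_le_of_le_ofReal (by positivity) (volume_symmDiff_add_Icc_le a b h)
  · rintro α ⟨-, C, -, hC⟩
    refine le_of_frequently_mul_rpow_le (C := C) one_pos (Eventually.frequently ?_)
    filter_upwards [Ioo_mem_nhdsGT (sub_pos.2 hab)] with t ht
    calc 1 * t ^ (1 : ℝ) = t := by rw [one_mul, Real.rpow_one]
      _ ≤ (volume (symmDiff ((fun x => x + t) '' Icc a b) (Icc a b))).toReal :=
        (ENNReal.ofReal_le_iff_le_toReal ((volume_symmDiff_add_Icc_le a b t).trans_lt
          ENNReal.ofReal_lt_top).ne).1 (le_volume_symmDiff_add_Icc ht.2.le)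
      _ ≤ C * t ^ α := by simpa [abs_of_pos ht.1] using hC t

theorem measure_cthickening_finset_le {X : Type*} [PseudoMetricSpace X] [MeasurableSpace X]
    (μ : Measure X) (s : Finset X) {ε : ℝ} (hε : 0 ≤ ε) :
    μ (cthickening ε ↑s) ≤ ∑ x ∈ s, μ (closedBall x ε) := by
  rw [s.finite_toSet.isCompact.cthickening_eq_biUnion_closedBall hε]
  exact measure_biUnion_finset_le s _

theorem measure_add_sum_measure_ball_le_measure_cthickening {X ι : Type*} [PseudoMetricSpace X]
    [MeasurableSpace X] [OpensMeasurableSpace X] (μ : Measure X) {G A : Set X} (hAG : A ⊆ G)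
    {t : Finset ι} {x : ι → X} (hxG : ∀ i ∈ t, x i ∈ G) {ε : ℝ}
    (hsep : ∀ i ∈ t, ∀ j ∈ t, i ≠ j → ε + ε ≤ dist (x i) (x j))
    (hfar : ∀ i ∈ t, ∀ a ∈ A, ε ≤ dist (x i) a) :
    μ A + ∑ i ∈ t, μ (ball (x i) ε) ≤ μ (cthickening ε G) := by
  have hdisj : Disjoint A (⋃ i ∈ t, ball (x i) ε) := by
    refine disjoint_iUnion₂_right.2 fun i hi => disjoint_left.2 fun a ha hball => ?_
    exact (hfar i hi a ha).not_gt (by rwa [mem_ball, dist_comm] at hball)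
  calc μ A + ∑ i ∈ t, μ (ball (x i) ε) = μ (A ∪ ⋃ i ∈ t, ball (x i) ε) := by
        rw [measure_union hdisj (t.measurableSet_biUnion fun _ _ => measurableSet_ball),
          measure_biUnion_finset (fun i hi j hj hij => ball_disjoint_ball (hsep i hi j hj hij))
            fun _ _ => measurableSet_ball]
    _ ≤ μ (cthickening ε G) := measure_mono <| union_subset (hAG.trans (self_subset_cthickening G))
        (iUnion₂_subset fun i hi =>
          ball_subset_closedBall.trans (closedBall_subset_cthickening (hxG i hi) ε))

theorem sub_mul_inv_sqrt_pow_three_div_two_le {x y : ℝ} (hx : 0 < x) (hxy : x ≤ y) :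
    (y - x) * (√y)⁻¹ ^ 3 / 2 ≤ (√x)⁻¹ - (√y)⁻¹ := by
  have ha : 0 < √x := Real.sqrt_pos.2 hx
  have hab : √x ≤ √y := Real.sqrt_le_sqrt hxy
  have hb : 0 < √y := ha.trans_le hab
  have hsq : y - x = √y ^ 2 - √x ^ 2 := by
    rw [Real.sq_sqrt hx.le, Real.sq_sqrt (hx.le.trans hxy)]
  have hdiff : (√x)⁻¹ - (√y)⁻¹ - (√y ^ 2 - √x ^ 2) * (√y)⁻¹ ^ 3 / 2 =
      (√y - √x) ^ 2 * (2 * √y + √x) / (2 * √x * √y ^ 3) := by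
    field_simp
    ring
  rw [← sub_nonneg, hsq, hdiff]
  positivity

namespace InvSqrtTile

noncomputable def invSqrt (n : ℕ) : ℝ := (√(n + 1))⁻¹

noncomputable def G : Set ℝ := Icc 0 1 ∪ insert 1 (range fun n => 1 + invSqrt n)

theorem invSqrt_pos (n : ℕ) : 0 < invSqrt n := inv_pos.2 (Real.sqrt_pos.2 (by positivity))

theorem invSqrt_le_one (n : ℕ) : invSqrt n ≤ 1 :=
  inv_le_one_of_one_le₀ (Real.one_le_sqrt.2 (by simp))

theorem invSqrt_sq (n : ℕ) : invSqrt n ^ 2 = (n + 1 : ℝ)⁻¹ := by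
  rw [invSqrt, inv_pow, Real.sq_sqrt (by positivity)]

theorem invSqrt_anti : Antitone invSqrt := fun m n hmn =>
  inv_anti₀ (Real.sqrt_pos.2 (by positivity)) (Real.sqrt_le_sqrt (by simpa using hmn))

theorem invSqrt_pow_three_div_two_le_sub {m n : ℕ} (hmn : m < n) :
    invSqrt n ^ 3 / 2 ≤ invSqrt m - invSqrt n := by
  have hle : (m + 1 : ℝ) ≤ n + 1 := by simpa using hmn.le
  have hgap : (1 : ℝ) ≤ (n + 1) - (m + 1) := by
    have : (m : ℝ) + 1 ≤ n := by exact_mod_cast hmn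
    linarith
  calc invSqrt n ^ 3 / 2 ≤ ((n + 1) - (m + 1)) * invSqrt n ^ 3 / 2 := by
        gcongr
        exact le_mul_of_one_le_left (pow_pos (invSqrt_pos n) 3).le hgap
    _ ≤ invSqrt m - invSqrt n := sub_mul_inv_sqrt_pow_three_div_two_le (by positivity) hle

theorem tendsto_invSqrt : Tendsto invSqrt atTop (𝓝[>] 0) := by
  refine tendsto_nhdsWithin_iff.2 ⟨?_, Eventually.of_forall invSqrt_pos⟩
  exact tendsto_inv_atTop_zero.comp <| Real.tendsto_sqrt_atTop.comp <|
    tendsto_atTop_add_const_right _ 1 tendsto_natCast_atTop_atTop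

theorem isCompact_G : IsCompact G := by
  refine isCompact_Icc.union (Tendsto.isCompact_insert_range ?_)
  simpa using (tendsto_nhdsWithin_iff.1 tendsto_invSqrt).1.const_add (1 : ℝ)

theorem G_ae_eq_Icc : G =ᵐ[volume] Icc (0 : ℝ) 1 :=
  union_ae_eq_left_of_ae_eq_empty (ae_eq_empty.2 (((countable_range _).insert 1).measure_zero _))

theorem volume_G : volume G = 1 := by
  rw [measure_congr G_ae_eq_Icc, Real.volume_Icc, sub_zero, ENNReal.ofReal_one]

theorem iUnion_add_intCast_G : ⋃ k : ℤ, (fun x => x + (k : ℝ)) '' G = univ := by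
  refine eq_univ_of_forall fun x => mem_iUnion.2 ⟨⌊x⌋, x - ⌊x⌋, Or.inl ⟨?_, ?_⟩, sub_add_cancel _ _⟩
  · linarith [Int.floor_le x]
  · linarith [Int.lt_floor_add_one x]

theorem volume_add_intCast_G_inter {k l : ℤ} (hkl : k ≠ l) :
    volume ((fun x => x + (k : ℝ)) '' G ∩ (fun x => x + (l : ℝ)) '' G) = 0 := by
  rw [measure_congr ((ae_eq_image_add_right G_ae_eq_Icc _).inter
    (ae_eq_image_add_right G_ae_eq_Icc _)), image_add_const_Icc, image_add_const_Icc,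
    Icc_inter_Icc, zero_add, zero_add]
  refine (subsingleton_Icc_of_ge ?_).measure_zero _
  rcases hkl.lt_or_gt with h | h
  · have : (k : ℝ) + 1 ≤ l := by exact_mod_cast h
    exact min_le_of_left_le (by linarith [le_max_right (k : ℝ) l])
  · have : (l : ℝ) + 1 ≤ k := by exact_mod_cast h
    exact min_le_of_right_le (by linarith [le_max_left (k : ℝ) l])

theorem holderReg_G : holderReg G = 1 :=
  (holderReg_congr_ae G_ae_eq_Icc).trans (holderReg_Icc zero_lt_one)

theorem one_add_invSqrt_mem_G (n : ℕ) : 1 + invSqrt n ∈ G := Or.inr (Or.inr ⟨n, rfl⟩)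

theorem invSqrt_le_of_inv_sq_le {δ : ℝ} (hδ : 0 < δ) {n : ℕ} (hn : δ⁻¹ ^ 2 ≤ n + 1) :
    invSqrt n ≤ δ := by
  refine (pow_le_pow_iff_left₀ (invSqrt_pos n).le hδ.le two_ne_zero).1 ?_
  rw [invSqrt_sq, ← inv_inv (δ ^ 2), ← inv_pow]
  exact inv_anti₀ (by positivity) hn

theorem G_subset_Icc_union_finset {δ : ℝ} (hδ : 0 < δ) :
    G ⊆ Icc 0 (1 + δ) ∪ ↑((Finset.range ⌈δ⁻¹ ^ 2⌉₊).image fun n => 1 + invSqrt n) := by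
  rintro x (hx | rfl | ⟨n, rfl⟩)
  · exact Or.inl ⟨hx.1, by linarith [hx.2]⟩
  · exact Or.inl ⟨zero_le_one, by linarith⟩
  · by_cases hn : n < ⌈δ⁻¹ ^ 2⌉₊
    · exact Or.inr (Finset.mem_coe.2 (Finset.mem_image_of_mem _ (Finset.mem_range.2 hn)))
    · have hN : δ⁻¹ ^ 2 ≤ n + 1 := by
        linarith [Nat.le_ceil (δ⁻¹ ^ 2), (Nat.cast_le (α := ℝ)).2 (not_lt.1 hn)]
      exact Or.inl ⟨by linarith [invSqrt_pos n], by linarith [invSqrt_le_of_inv_sq_le hδ hN]⟩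

theorem toReal_volume_cthickening_G_le {δ : ℝ} (hδ : 0 < δ) (hδ1 : δ ≤ 1) :
    (volume (cthickening (δ ^ 3) G)).toReal ≤ 1 + 7 * δ := by
  set N := ⌈δ⁻¹ ^ 2⌉₊
  set S : Finset ℝ := (Finset.range N).image fun n => 1 + invSqrt n
  have hcover : G ⊆ closedBall ((1 + δ) / 2) ((1 + δ) / 2) ∪ ↑S := by
    rw [Real.closedBall_eq_Icc, sub_self, add_halves]
    exact G_subset_Icc_union_finset hδ
  have hvol : volume (cthickening (δ ^ 3) G) ≤
      ENNReal.ofReal (2 * (δ ^ 3 + (1 + δ) / 2)) + N * ENNReal.ofReal (2 * δ ^ 3) :=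
    calc volume (cthickening (δ ^ 3) G)
        ≤ volume (cthickening (δ ^ 3) (closedBall ((1 + δ) / 2) ((1 + δ) / 2)))
          + volume (cthickening (δ ^ 3) (S : Set ℝ)) := by
          refine (measure_mono ?_).trans (measure_union_le _ _)
          exact (cthickening_subset_of_subset _ hcover).trans (cthickening_union _ _ _).le
      _ ≤ ENNReal.ofReal (2 * (δ ^ 3 + (1 + δ) / 2)) + S.card * ENNReal.ofReal (2 * δ ^ 3) := by
          rw [cthickening_closedBall (by positivity) (by positivity), Real.volume_closedBall]
          gcongr
          simpa [Real.volume_closedBall] using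
            measure_cthickening_finset_le volume S (by positivity : (0 : ℝ) ≤ δ ^ 3)
      _ ≤ _ := by
          gcongr
          exact_mod_cast (Finset.card_image_le.trans (Finset.card_range N).le)
  have hN : (N : ℝ) * δ ^ 3 ≤ δ + δ ^ 3 := by
    have := (Nat.ceil_lt_add_one (by positivity : (0 : ℝ) ≤ δ⁻¹ ^ 2)).le
    calc (N : ℝ) * δ ^ 3 ≤ (δ⁻¹ ^ 2 + 1) * δ ^ 3 := by gcongr
      _ = δ + δ ^ 3 := by field_simp
  have hδ3 : δ ^ 3 ≤ δ := pow_le_of_le_one hδ.le hδ1 (by norm_num)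
  refine ENNReal.toReal_le_of_le_ofReal (by positivity) (hvol.trans ?_)
  rw [← ENNReal.ofReal_natCast, ← ENNReal.ofReal_mul (Nat.cast_nonneg _),
    ← ENNReal.ofReal_add (by positivity) (by positivity)]
  exact ENNReal.ofReal_le_ofReal (by linarith)

theorem invSqrt_pow_three_div_two_le_dist {k m n : ℕ} (hm : m < k) (hn : n < k) (hmn : m ≠ n) :
    invSqrt k ^ 3 / 2 ≤ dist (1 + invSqrt m) (1 + invSqrt n) := by
  wlog h : m < n generalizing m n
  · rw [dist_comm]
    exact this hn hm hmn.symm (hmn.lt_or_gt.resolve_left h)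
  calc invSqrt k ^ 3 / 2 ≤ invSqrt n ^ 3 / 2 := by
        gcongr
        exacts [(invSqrt_pos k).le, invSqrt_anti hn.le]
    _ ≤ invSqrt m - invSqrt n := invSqrt_pow_three_div_two_le_sub h
    _ ≤ dist (1 + invSqrt m) (1 + invSqrt n) := by
        rw [Real.dist_eq, add_sub_add_left_eq_sub]
        exact le_abs_self _

theorem invSqrt_pow_three_le_dist {k n : ℕ} (hn : n ≤ k) {a : ℝ} (ha : a ≤ 1) :
    invSqrt k ^ 3 ≤ dist (1 + invSqrt n) a :=
  calc invSqrt k ^ 3 ≤ invSqrt k :=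
        pow_le_of_le_one (invSqrt_pos k).le (invSqrt_le_one k) (by norm_num)
    _ ≤ invSqrt n := invSqrt_anti hn
    _ ≤ 1 + invSqrt n - a := by linarith
    _ ≤ dist (1 + invSqrt n) a := le_abs_self _

theorem one_add_invSqrt_div_four_le {k : ℕ} (hk : 1 ≤ k) :
    1 + invSqrt k / 4 ≤ (volume (cthickening (invSqrt k ^ 3 / 4) G)).toReal := by
  have hcube_pos : 0 < invSqrt k ^ 3 := pow_pos (invSqrt_pos k) 3
  have hsep : ∀ m ∈ Finset.range k, ∀ n ∈ Finset.range k, m ≠ n →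
      invSqrt k ^ 3 / 4 + invSqrt k ^ 3 / 4 ≤ dist (1 + invSqrt m) (1 + invSqrt n) :=
    fun m hm n hn hmn => by
      have := invSqrt_pow_three_div_two_le_dist (Finset.mem_range.1 hm) (Finset.mem_range.1 hn) hmn
      linarith
  have hfar : ∀ n ∈ Finset.range k, ∀ a ∈ Icc (0 : ℝ) 1,
      invSqrt k ^ 3 / 4 ≤ dist (1 + invSqrt n) a :=
    fun n hn a ha => (div_le_self hcube_pos.le (by norm_num)).trans
      (invSqrt_pow_three_le_dist (Finset.mem_range.1 hn).le ha.2)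
  have hball := measure_add_sum_measure_ball_le_measure_cthickening volume (G := G)
    (subset_union_left : Icc 0 1 ⊆ G) (fun n _ => one_add_invSqrt_mem_G n) hsep hfar
  simp only [Real.volume_Icc, Real.volume_ball, Finset.sum_const, Finset.card_range,
    nsmul_eq_mul, sub_zero] at hball
  rw [← ENNReal.ofReal_natCast, ← ENNReal.ofReal_mul (Nat.cast_nonneg _),
    ← ENNReal.ofReal_add zero_le_one (by positivity),
    ENNReal.ofReal_le_iff_le_toReal isCompact_G.cthickening.measure_lt_top.ne] at hball
  refine le_trans ?_ hball
  have hk' : (1 : ℝ) ≤ k := by exact_mod_cast hk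
  have hcube : invSqrt k ^ 3 * (k + 1) = invSqrt k := by
    have := invSqrt_sq k
    field_simp at this
    linear_combination invSqrt k * this
  nlinarith [mul_nonneg hcube_pos.le (sub_nonneg.2 hk')]

theorem surfReg_G : surfReg G = 1 / 3 := by
  refine IsGreatest.csSup_eq ⟨⟨by norm_num, 7, by norm_num, fun ε hε hε1 => ?_⟩, ?_⟩
  · have hcube : (ε ^ (1 / 3 : ℝ)) ^ 3 = ε := by
      rw [← Real.rpow_mul_natCast hε.le]
      norm_num
    have := toReal_volume_cthickening_G_le (Real.rpow_pos_of_pos hε _)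
      (Real.rpow_le_one hε.le hε1 (by norm_num : (0 : ℝ) ≤ 1 / 3))
    rw [hcube] at this
    rw [volume_G, ENNReal.toReal_one]
    linarith
  · rintro s ⟨hs, C, hC0, hC⟩
    suffices 3 * s ≤ 1 by linarith
    refine le_of_frequently_mul_rpow_le (c := 1 / 4) (C := C) (by norm_num)
      (tendsto_invSqrt.frequently (Eventually.frequently ?_))
    filter_upwards [eventually_ge_atTop 1] with k hk
    have ht := invSqrt_pos k
    have ht1 := invSqrt_le_one k
    calc 1 / 4 * invSqrt k ^ (1 : ℝ) = invSqrt k / 4 := by rw [Real.rpow_one]; ring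
      _ ≤ (volume (cthickening (invSqrt k ^ 3 / 4) G)).toReal - (volume G).toReal := by
        rw [volume_G, ENNReal.toReal_one]
        linarith [one_add_invSqrt_div_four_le hk]
      _ ≤ C * (invSqrt k ^ 3 / 4) ^ s := hC _ (by positivity) (by
        have := pow_le_one₀ ht.le ht1 (n := 3)
        linarith)
      _ ≤ C * (invSqrt k ^ 3) ^ s := by
        gcongr
        linarith [pow_pos ht 3]
      _ = C * invSqrt k ^ (3 * s) := by
        rw [← Real.rpow_natCast_mul ht.le]
        norm_num

end InvSqrtTile

/-- There is a compact tile `G ⊂ ℝ` (integer translates cover `ℝ` and pairwise intersect in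
measure zero) with `α(G) = 1` and `s(G) = 1/3`. -/
theorem exists_tile_holder_one_surf_third :
    ∃ G : Set ℝ, IsCompact G ∧
      (⋃ k : ℤ, (fun x => x + (k : ℝ)) '' G) = Set.univ ∧
      (∀ k l : ℤ, k ≠ l →
        volume (((fun x => x + (k : ℝ)) '' G) ∩ ((fun x => x + (l : ℝ)) '' G)) = 0) ∧
      holderReg G = 1 ∧ surfReg G = 1 / 3 :=
  ⟨InvSqrtTile.G, InvSqrtTile.isCompact_G, InvSqrtTile.iUnion_add_intCast_G,
    fun _ _ => InvSqrtTile.volume_add_intCast_G_inter, InvSqrtTile.holderReg_G,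
    InvSqrtTile.surfReg_G⟩
end

section
/- Let G ⊆ ℝⁿ be a nonempty compact set of positive Lebesgue measure. Then for every r > 0, |G_{2r}| − |G| ≤ 2ⁿ·(|G_r| − |G|), where G_r denotes the r-neighbourhood of G. -/
/-!
Send a point `x` of `G_{2r} \ G` to the midpoint `T x` of `x` and a nearest point `π x ∈ G`.
Then `T x` lies at distance `dist(x, G) / 2` from `G`, so `T` maps `G_{2r} \ G` into `G_r \ G`.
Nearest-point selections are monotone, `⟪x - y, π x - π y⟫ ≥ 0`, which gives
`‖x - y‖ ≤ ‖x - y + (π x - π y)‖ = 2 ‖T x - T y‖`. A map that shrinks distances by at most a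
factor `2` shrinks `n`-dimensional Hausdorff measure, hence Lebesgue measure, by at most `2ⁿ`.
-/

open MeasureTheory Metric Set Module
open scoped NNReal ENNReal RealInnerProductSpace

section InnerProductSpace

variable {E : Type*} [NormedAddCommGroup E] [InnerProductSpace ℝ E]

theorem norm_le_norm_add_of_inner_nonneg {v s : E} (h : 0 ≤ ⟪v, s⟫) : ‖v‖ ≤ ‖v + s‖ := by
  have hsq : ‖v‖ ^ 2 ≤ ‖v + s‖ ^ 2 := by
    rw [norm_add_sq_real]
    nlinarith [sq_nonneg ‖s‖]
  exact (pow_le_pow_iff_left₀ (norm_nonneg _) (norm_nonneg _) two_ne_zero).mp hsq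

theorem inner_sub_sub_nonneg_of_dist_le {x y g g' : E} (hx : dist x g ≤ dist x g')
    (hy : dist y g' ≤ dist y g) : 0 ≤ ⟪x - y, g - g'⟫ := by
  have hx2 := pow_le_pow_left₀ dist_nonneg hx 2
  have hy2 := pow_le_pow_left₀ dist_nonneg hy 2
  simp only [dist_eq_norm, @norm_sub_sq_real] at hx2 hy2
  simp only [inner_sub_left, inner_sub_right] at hx2 hy2 ⊢
  linarith

theorem dist_le_two_mul_dist_midpoint {x y g g' : E} (hx : dist x g ≤ dist x g')
    (hy : dist y g' ≤ dist y g) :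
    dist x y ≤ 2 * dist (midpoint ℝ x g) (midpoint ℝ y g') := by
  have hmid : midpoint ℝ x g - midpoint ℝ y g' = (2⁻¹ : ℝ) • (x - y + (g - g')) := by
    rw [midpoint_eq_smul_add, midpoint_eq_smul_add, ← smul_sub]
    congr 1
    abel
  rw [dist_eq_norm, dist_eq_norm, hmid, norm_smul, norm_inv, Real.norm_two,
    mul_inv_cancel_left₀ two_ne_zero]
  exact norm_le_norm_add_of_inner_nonneg (inner_sub_sub_nonneg_of_dist_le hx hy)

end InnerProductSpace

theorem Metric.mem_cthickening_iff_infDist_le {X : Type*} [PseudoMetricSpace X] {s : Set X}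
    {x : X} {δ : ℝ} (hδ : 0 ≤ δ) (hs : s.Nonempty) : x ∈ cthickening δ s ↔ infDist x s ≤ δ := by
  rw [mem_cthickening_iff, infDist]
  exact ENNReal.le_ofReal_iff_toReal_le (infEDist_ne_top hs) hδ

section NormedSpace

variable {E : Type*} [NormedAddCommGroup E] [NormedSpace ℝ E] {G : Set E} {x g : E}

theorem infDist_midpoint_of_dist_eq_infDist (hg : g ∈ G) (hx : dist x g = infDist x G) :
    infDist (midpoint ℝ x g) G = infDist x G / 2 := by
  have hxm : dist x (midpoint ℝ x g) = infDist x G / 2 := by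
    rw [dist_left_midpoint, hx, Real.norm_two]; ring
  have hmg : dist (midpoint ℝ x g) g = infDist x G / 2 := by
    rw [dist_midpoint_right, hx, Real.norm_two]; ring
  refine le_antisymm (hmg ▸ infDist_le_dist_of_mem hg) ?_
  linarith [infDist_le_infDist_add_dist (x := x) (y := midpoint ℝ x g) (s := G)]

theorem midpoint_mem_cthickening_sdiff {r : ℝ} (hG : IsClosed G) (hr : 0 ≤ r) (hg : g ∈ G)
    (hx : dist x g = infDist x G) (hxG : x ∈ cthickening (2 * r) G \ G) :
    midpoint ℝ x g ∈ cthickening r G \ G := by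
  have hne : G.Nonempty := ⟨g, hg⟩
  have hle := (mem_cthickening_iff_infDist_le (by positivity) hne).mp hxG.1
  have hpos := (hG.notMem_iff_infDist_pos hne).mp hxG.2
  rw [Set.mem_sdiff, mem_cthickening_iff_infDist_le hr hne, hG.notMem_iff_infDist_pos hne,
    infDist_midpoint_of_dist_eq_infDist hg hx]
  constructor <;> linarith

end NormedSpace

theorem hausdorffMeasure_le_mul_hausdorffMeasure_image {X Y : Type*} [EMetricSpace X]
    [MeasurableSpace X] [BorelSpace X] [EMetricSpace Y] [MeasurableSpace Y] [BorelSpace Y]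
    {f : X → Y} {s : Set X} {K : ℝ≥0} {d : ℝ} (hd : 0 ≤ d)
    (hf : ∀ x ∈ s, ∀ y ∈ s, edist x y ≤ K * edist (f x) (f y)) :
    μH[d] s ≤ (K : ℝ≥0∞) ^ d * μH[d] (f '' s) := by
  have hanti : AntilipschitzWith K (s.domRestrict f) := fun x y => hf x x.2 y y.2
  calc μH[d] s = μH[d] (((↑) : s → X) '' univ) := by rw [image_univ, Subtype.range_coe]
    _ = μH[d] (univ : Set s) := isometry_subtype_coe.hausdorffMeasure_image (.inl hd) _
    _ ≤ (K : ℝ≥0∞) ^ d * μH[d] (s.domRestrict f '' univ) := hanti.le_hausdorffMeasure_image hd _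
    _ = (K : ℝ≥0∞) ^ d * μH[d] (f '' s) := by rw [image_univ, range_domRestrict]

theorem addHaar_le_pow_finrank_mul_addHaar_image {E : Type*} [NormedAddCommGroup E]
    [NormedSpace ℝ E] [FiniteDimensional ℝ E] [MeasurableSpace E] [BorelSpace E]
    (μ : Measure E) [μ.IsAddHaarMeasure] {f : E → E} {s : Set E} {K : ℝ≥0}
    (hf : ∀ x ∈ s, ∀ y ∈ s, dist x y ≤ K * dist (f x) (f y)) :
    μ s ≤ (K : ℝ≥0∞) ^ finrank ℝ E * μ (f '' s) := by
  have hμ := Measure.isAddLeftInvariant_eq_smul μ μH[finrank ℝ E]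
  have hedist : ∀ x ∈ s, ∀ y ∈ s, edist x y ≤ K * edist (f x) (f y) := fun x hx y hy => by
    rw [edist_dist, edist_dist, ← ENNReal.ofReal_coe_nnreal, ← ENNReal.ofReal_mul K.coe_nonneg]
    exact ENNReal.ofReal_le_ofReal (hf x hx y hy)
  have hH :=
    hausdorffMeasure_le_mul_hausdorffMeasure_image (d := finrank ℝ E) (Nat.cast_nonneg _) hedist
  rw [ENNReal.rpow_natCast] at hH
  rw [hμ]
  simp only [Measure.smul_apply, ENNReal.smul_def, smul_eq_mul]
  rw [mul_left_comm]
  gcongr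

theorem volume_cthickening_two_mul_le_general {n : ℕ} (G : Set (EuclideanSpace ℝ (Fin n)))
    (hG : IsCompact G) (hne : G.Nonempty) (r : ℝ) (hr : 0 < r) :
    (volume (cthickening (2 * r) G)).toReal - (volume G).toReal ≤
      2 ^ n * ((volume (cthickening r G)).toReal - (volume G).toReal) := by
  choose p hpG hpd using hG.exists_infDist_eq_dist hne
  set T := fun x => midpoint ℝ x (p x)
  have hmaps : MapsTo T (cthickening (2 * r) G \ G) (cthickening r G \ G) := fun x hx =>
    midpoint_mem_cthickening_sdiff hG.isClosed hr.le (hpG x) (hpd x).symm hx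
  have hanti : ∀ x ∈ cthickening (2 * r) G \ G, ∀ y ∈ cthickening (2 * r) G \ G,
      dist x y ≤ ((2 : ℝ≥0) : ℝ) * dist (T x) (T y) := fun x _ y _ =>
    dist_le_two_mul_dist_midpoint ((hpd x).ge.trans (infDist_le_dist_of_mem (hpG y)))
      ((hpd y).ge.trans (infDist_le_dist_of_mem (hpG x)))
  have hvol : volume (cthickening (2 * r) G \ G) ≤ 2 ^ n * volume (cthickening r G \ G) :=
    calc volume (cthickening (2 * r) G \ G)
        ≤ ((2 : ℝ≥0) : ℝ≥0∞) ^ n * volume (T '' (cthickening (2 * r) G \ G)) := by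
          simpa only [finrank_euclideanSpace_fin] using
            addHaar_le_pow_finrank_mul_addHaar_image volume hanti
      _ ≤ 2 ^ n * volume (cthickening r G \ G) := by
          gcongr
          · simp
          · exact hmaps.image_subset
  have hfin (δ : ℝ) : volume (cthickening δ G) ≠ ∞ := hG.cthickening.measure_lt_top.ne
  simp only [← measureReal_def]
  rw [← measureReal_sdiff (self_subset_cthickening G) hG.isClosed.measurableSet (hfin _),
    ← measureReal_sdiff (self_subset_cthickening G) hG.isClosed.measurableSet (hfin _)]
  simpa [measureReal_def] using ENNReal.toReal_mono
    (ENNReal.mul_ne_top (by simp) (measure_ne_top_of_subset sdiff_subset (hfin r))) hvol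

/-- For a nonempty compact `G ⊆ ℝⁿ` of positive measure and every `r > 0`,
`|G_{2r}| - |G| ≤ 2ⁿ (|G_r| - |G|)`. -/
theorem volume_cthickening_two_mul_le {n : ℕ} (G : Set (EuclideanSpace ℝ (Fin n)))
    (hG : IsCompact G) (hne : G.Nonempty) (hpos : 0 < volume G) (r : ℝ) (hr : 0 < r) :
    (volume (cthickening (2 * r) G)).toReal - (volume G).toReal ≤
      2 ^ n * ((volume (cthickening r G)).toReal - (volume G).toReal) :=
  volume_cthickening_two_mul_le_general G hG hne r hr
end

section
/- Let G ⊆ ℝⁿ be a compact set of positive Lebesgue measure. Suppose there exist constants c₁ > 0, c₂ > 0 and ε₀ > 0 such that for every ε ∈ (0, ε₀), the Lebesgue measure of the set { x ∈ G_ε \ G : ν(x, 2ε) ≥ c₁ } is at least c₂·|G_ε \ G|. Then s(G) = α(G). -/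
open MeasureTheory Metric Filter Set Pointwise

/-- `ν(x,r)`: the proportion of the ball `B(x,r)` covered by `G`. -/
noncomputable def nuRatio {n : ℕ} (G : Set (EuclideanSpace ℝ (Fin n)))
    (x : EuclideanSpace ℝ (Fin n)) (r : ℝ) : ℝ :=
  (volume (closedBall x r ∩ G)).toReal / (volume (closedBall x r)).toReal

section Aux

variable {n : ℕ}

lemma aux_vol_image_add (A : Set (EuclideanSpace ℝ (Fin n))) (h : EuclideanSpace ℝ (Fin n)) :
    volume ((fun x => x + h) '' A) = volume A := by
  have : (fun x => x + h) '' A = (fun x => x + (-h)) ⁻¹' A := by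
    ext x
    constructor
    · rintro ⟨a, ha, rfl⟩; simpa using ha
    · intro hx; exact ⟨x + -h, hx, neg_add_cancel_right x h⟩
  rw [this, measure_preimage_add_right]

lemma aux_diff_image (Gs : Set (EuclideanSpace ℝ (Fin n))) (h : EuclideanSpace ℝ (Fin n)) :
    volume (Gs \ ((fun x => x + h) '' Gs)) = volume (((fun x => x + (-h)) '' Gs) \ Gs) := by
  have hinj : Function.Injective (fun x : EuclideanSpace ℝ (Fin n) => x + h) :=
    fun a b hab => by simpa using congrArg (· + (-h)) hab
  have h1 : (fun x => x + h) '' (((fun x => x + (-h)) '' Gs) \ Gs)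
      = Gs \ ((fun x => x + h) '' Gs) := by
    rw [Set.image_diff hinj]
    congr 1
    rw [Set.image_image]
    ext x; simp
  rw [← h1, aux_vol_image_add]

lemma aux_symmDiff_le (Gs : Set (EuclideanSpace ℝ (Fin n))) (h : EuclideanSpace ℝ (Fin n)) :
    volume (symmDiff ((fun x => x + h) '' Gs) Gs) ≤ 2 * volume (cthickening ‖h‖ Gs \ Gs) := by
  rw [Set.symmDiff_def]
  refine le_trans (measure_union_le _ _) ?_
  have h1 : ((fun x => x + h) '' Gs) \ Gs ⊆ cthickening ‖h‖ Gs \ Gs := by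
    rintro x ⟨⟨g, hg, rfl⟩, hxG⟩
    exact ⟨mem_cthickening_of_dist_le _ g _ _ hg (by simp [dist_eq_norm]), hxG⟩
  have h2 : volume (Gs \ ((fun x => x + h) '' Gs)) ≤ volume (cthickening ‖h‖ Gs \ Gs) := by
    rw [aux_diff_image]
    refine measure_mono ?_
    rintro x ⟨⟨g, hg, rfl⟩, hxG⟩
    exact ⟨mem_cthickening_of_dist_le _ g _ _ hg (by simp [dist_eq_norm]), hxG⟩
  calc volume (((fun x => x + h) '' Gs) \ Gs) + volume (Gs \ ((fun x => x + h) '' Gs))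
      ≤ volume (cthickening ‖h‖ Gs \ Gs) + volume (cthickening ‖h‖ Gs \ Gs) :=
        add_le_add (measure_mono h1) h2
    _ = 2 * volume (cthickening ‖h‖ Gs \ Gs) := (two_mul _).symm

lemma aux_diff_toReal (G : Set (EuclideanSpace ℝ (Fin n))) (hG : IsCompact G) (ε : ℝ) :
    (volume (cthickening ε G \ G)).toReal
      = (volume (cthickening ε G)).toReal - (volume G).toReal := by
  rw [measure_diff (self_subset_cthickening G) hG.isClosed.measurableSet.nullMeasurableSet
      hG.measure_lt_top.ne,
    ENNReal.toReal_sub_of_le (measure_mono (self_subset_cthickening G))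
      hG.cthickening.measure_lt_top.ne]

lemma aux_S_subset_A (G : Set (EuclideanSpace ℝ (Fin n))) (hG : IsCompact G)
    {s C : ℝ} (hs : 0 ≤ s) (hC : 0 < C)
    (hb : ∀ ε : ℝ, 0 < ε → ε ≤ 1 →
      (volume (cthickening ε G)).toReal - (volume G).toReal ≤ C * ε ^ s) :
    ∃ C' : ℝ, 0 < C' ∧ ∀ h : EuclideanSpace ℝ (Fin n),
      (volume (symmDiff ((fun x => x + h) '' G) G)).toReal ≤ C' * ‖h‖ ^ s := by
  refine ⟨2 * C + 2 * (volume G).toReal + 1, by positivity, fun h => ?_⟩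
  have hvol : (0:ℝ) ≤ (volume G).toReal := ENNReal.toReal_nonneg
  rcases eq_or_ne h 0 with rfl | hh
  · have him : (fun x => x + (0 : EuclideanSpace ℝ (Fin n))) '' G = G := by simp
    rw [him, symmDiff_self]
    have : ((0 : ℝ) : ℝ) ≤ (2 * C + 2 * (volume G).toReal + 1) * ‖(0 : EuclideanSpace ℝ (Fin n))‖ ^ s := by
      have := Real.rpow_nonneg (norm_nonneg (0 : EuclideanSpace ℝ (Fin n))) s
      positivity
    simpa using this
  · have hn : 0 < ‖h‖ := norm_pos_iff.mpr hh
    have hrs : (0:ℝ) ≤ ‖h‖ ^ s := Real.rpow_nonneg (norm_nonneg h) s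
    rcases le_or_gt ‖h‖ 1 with h1 | h1
    · have key := aux_symmDiff_le G h
      have hfin : volume (cthickening ‖h‖ G \ G) ≠ ⊤ :=
        ((measure_mono Set.diff_subset).trans_lt hG.cthickening.measure_lt_top).ne
      have h2 : (volume (symmDiff ((fun x => x + h) '' G) G)).toReal
          ≤ 2 * (volume (cthickening ‖h‖ G \ G)).toReal := by
        have h3 := ENNReal.toReal_mono (ENNReal.mul_ne_top (by norm_num) hfin) key
        rwa [ENNReal.toReal_mul, ENNReal.toReal_ofNat] at h3
      have h4 := hb ‖h‖ hn h1
      rw [aux_diff_toReal G hG] at h2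
      nlinarith
    · have hb2 : volume (symmDiff ((fun x => x + h) '' G) G) ≤ 2 * volume G := by
        refine le_trans (measure_mono Set.symmDiff_subset_union) ?_
        refine le_trans (measure_union_le _ _) ?_
        rw [aux_vol_image_add, two_mul]
      have h2 : (volume (symmDiff ((fun x => x + h) '' G) G)).toReal
          ≤ 2 * (volume G).toReal := by
        have h3 := ENNReal.toReal_mono (ENNReal.mul_ne_top (by norm_num) hG.measure_lt_top.ne) hb2
        rwa [ENNReal.toReal_mul, ENNReal.toReal_ofNat] at h3
      have h5 : (1:ℝ) ≤ ‖h‖ ^ s := Real.one_le_rpow h1.le hs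
      nlinarith

lemma aux_density_bound (G : Set (EuclideanSpace ℝ (Fin n))) (hG : IsCompact G)
    {c₁ C α ε : ℝ} (hc₁ : 0 < c₁) (hC : 0 < C) (hα : 0 ≤ α) (hε : 0 < ε)
    (hb : ∀ h : EuclideanSpace ℝ (Fin n),
      (volume (symmDiff ((fun x => x + h) '' G) G)).toReal ≤ C * ‖h‖ ^ α) :
    c₁ * (volume {x | x ∈ cthickening ε G \ G ∧ c₁ ≤ nuRatio G x (2 * ε)}).toReal
      ≤ C * (2 * ε) ^ α := by
  set r := 2 * ε with hr
  have hrpos : 0 < r := by positivity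
  have hGm : MeasurableSet G := hG.isClosed.measurableSet
  set B₀ := closedBall (0 : EuclideanSpace ℝ (Fin n)) r with hB₀
  have hBpos : 0 < volume B₀ := measure_closedBall_pos _ _ hrpos
  have hBfin : volume B₀ ≠ ⊤ := measure_closedBall_lt_top.ne
  have hball : ∀ x : EuclideanSpace ℝ (Fin n), volume (closedBall x r) = volume B₀ :=
    fun x => Measure.addHaar_closedBall_center volume x r
  set S := {x : EuclideanSpace ℝ (Fin n) | x ∈ cthickening ε G \ G ∧ c₁ ≤ nuRatio G x r}
    with hS
  -- measurability of x ↦ volume (closedBall x r ∩ G)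
  have hmeasg : Measurable (fun x : EuclideanSpace ℝ (Fin n) => volume (closedBall x r ∩ G)) := by
    have hT0 : MeasurableSet ({p : EuclideanSpace ℝ (Fin n) × EuclideanSpace ℝ (Fin n) |
        dist p.2 p.1 ≤ r} ∩ (Prod.snd ⁻¹' G)) := by
      refine MeasurableSet.inter ?_ (measurable_snd hGm)
      apply measurableSet_le <;> fun_prop
    have heq : ∀ x : EuclideanSpace ℝ (Fin n),
        Prod.mk x ⁻¹' ({p : EuclideanSpace ℝ (Fin n) × EuclideanSpace ℝ (Fin n) |
          dist p.2 p.1 ≤ r} ∩ (Prod.snd ⁻¹' G)) = closedBall x r ∩ G := by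
      intro x; ext y; simp [mem_closedBall]
    have := measurable_measure_prodMk_left
      (ν := (volume : Measure (EuclideanSpace ℝ (Fin n)))) hT0
    simpa only [heq] using this
  have hSm : MeasurableSet S := by
    have h1 : MeasurableSet (cthickening ε G \ G) :=
      isClosed_cthickening.measurableSet.diff hGm
    have h2 : Measurable fun x : EuclideanSpace ℝ (Fin n) => nuRatio G x r := by
      have hden : (fun x : EuclideanSpace ℝ (Fin n) => (volume (closedBall x r)).toReal)
          = fun _ => (volume B₀).toReal := by
        funext x; rw [hball]
      unfold nuRatio
      exact hmeasg.ennreal_toReal.div (by rw [hden]; exact measurable_const)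
    have hrw : S = (cthickening ε G \ G) ∩ {x | c₁ ≤ nuRatio G x r} := rfl
    rw [hrw]
    exact h1.inter (measurableSet_le measurable_const h2)
  -- step A: pointwise lower bound on S
  have stepA : ∀ x ∈ S, ENNReal.ofReal c₁ * volume B₀ ≤ volume (closedBall x r ∩ G) := by
    intro x hx
    have hnu : c₁ ≤ nuRatio G x r := hx.2
    have hb0 : (0:ℝ) < (volume B₀).toReal := ENNReal.toReal_pos hBpos.ne' hBfin
    have hfin2 : volume (closedBall x r ∩ G) ≠ ⊤ :=
      ((measure_mono Set.inter_subset_left).trans_lt measure_closedBall_lt_top).ne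
    have hmul : c₁ * (volume B₀).toReal ≤ (volume (closedBall x r ∩ G)).toReal := by
      unfold nuRatio at hnu
      rw [hball] at hnu
      exact (le_div_iff₀ hb0).mp hnu
    calc ENNReal.ofReal c₁ * volume B₀ = ENNReal.ofReal (c₁ * (volume B₀).toReal) := by
          rw [ENNReal.ofReal_mul hc₁.le, ENNReal.ofReal_toReal hBfin]
      _ ≤ ENNReal.ofReal ((volume (closedBall x r ∩ G)).toReal) :=
          ENNReal.ofReal_le_ofReal hmul
      _ = volume (closedBall x r ∩ G) := ENNReal.ofReal_toReal hfin2
  -- the product set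
  set T : Set (EuclideanSpace ℝ (Fin n) × EuclideanSpace ℝ (Fin n)) :=
    (Prod.fst ⁻¹' B₀) ∩ (Prod.snd ⁻¹' S) ∩ {p | p.2 - p.1 ∈ G} with hT
  have hBm : MeasurableSet B₀ := measurableSet_closedBall
  have hTm : MeasurableSet T :=
    ((measurable_fst hBm).inter (measurable_snd hSm)).inter
      ((measurable_snd.sub measurable_fst) hGm)
  have slice1 : ∀ h : EuclideanSpace ℝ (Fin n), volume (Prod.mk h ⁻¹' T)
      = B₀.indicator (fun h => volume (S ∩ ((fun x => x + h) '' G))) h := by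
    intro h
    by_cases hh : h ∈ B₀
    · rw [Set.indicator_of_mem hh]
      congr 1
      ext x
      simp only [hT, Set.mem_preimage, Set.mem_inter_iff, Set.mem_setOf_eq, Set.mem_image]
      constructor
      · rintro ⟨⟨-, hxS⟩, hxG⟩; exact ⟨hxS, x - h, hxG, by abel⟩
      · rintro ⟨hxS, g, hg, rfl⟩; exact ⟨⟨hh, hxS⟩, by simpa using hg⟩
    · rw [Set.indicator_of_notMem hh]
      have : Prod.mk h ⁻¹' T = ∅ := by
        ext x; simp [hT, hh]
      rw [this, measure_empty]
  have slice2 : ∀ x : EuclideanSpace ℝ (Fin n), volume ((fun h => (h, x)) ⁻¹' T)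
      = S.indicator (fun x => volume (closedBall x r ∩ G)) x := by
    intro x
    by_cases hx : x ∈ S
    · rw [Set.indicator_of_mem hx]
      have hpre : (fun h : EuclideanSpace ℝ (Fin n) => (h, x)) ⁻¹' T
          = (fun h : EuclideanSpace ℝ (Fin n) => x - h) ⁻¹' (closedBall x r ∩ G) := by
        ext h
        simp only [hT, Set.mem_preimage, Set.mem_inter_iff, Set.mem_setOf_eq, hx, and_true,
          hB₀, mem_closedBall, dist_eq_norm, sub_zero]
        rw [show x - h - x = -h by abel, norm_neg]
      rw [hpre]
      have hcomp : (fun h : EuclideanSpace ℝ (Fin n) => x - h)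
          = (fun y : EuclideanSpace ℝ (Fin n) => y + x) ∘ (fun h => -h) := by
        funext h; simp [sub_eq_neg_add]
      rw [hcomp, Set.preimage_comp]
      rw [Measure.measure_preimage_neg, measure_preimage_add_right]
    · rw [Set.indicator_of_notMem hx]
      have : (fun h : EuclideanSpace ℝ (Fin n) => (h, x)) ⁻¹' T = ∅ := by
        ext h; simp [hT, hx]
      rw [this, measure_empty]
  have int1 : (volume.prod volume) T
      = ∫⁻ h in B₀, volume (S ∩ ((fun x => x + h) '' G)) := by
    rw [Measure.prod_apply hTm, lintegral_congr slice1,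
      lintegral_indicator measurableSet_closedBall]
  have int2 : (volume.prod volume) T = ∫⁻ x in S, volume (closedBall x r ∩ G) := by
    rw [Measure.prod_apply_symm hTm, lintegral_congr slice2, lintegral_indicator hSm]
  have low : ENNReal.ofReal c₁ * volume B₀ * volume S ≤ (volume.prod volume) T := by
    rw [int2]
    calc ENNReal.ofReal c₁ * volume B₀ * volume S
        = ∫⁻ _ in S, ENNReal.ofReal c₁ * volume B₀ := (setLIntegral_const _ _).symm
      _ ≤ ∫⁻ x in S, volume (closedBall x r ∩ G) := setLIntegral_mono hmeasg stepA
  have up : (volume.prod volume) T ≤ ENNReal.ofReal (C * r ^ α) * volume B₀ := by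
    rw [int1]
    calc ∫⁻ h in B₀, volume (S ∩ ((fun x => x + h) '' G))
        ≤ ∫⁻ _ in B₀, ENNReal.ofReal (C * r ^ α) := by
          refine setLIntegral_mono measurable_const ?_
          intro h hh
          have hsub : S ∩ ((fun x => x + h) '' G) ⊆ symmDiff ((fun x => x + h) '' G) G := by
            rintro x ⟨hxS, hxI⟩
            rw [Set.symmDiff_def]
            exact Or.inl ⟨hxI, hxS.1.2⟩
          have hfin : volume (symmDiff ((fun x => x + h) '' G) G) ≠ ⊤ := by
            refine ((measure_mono Set.symmDiff_subset_union).trans_lt ?_).ne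
            refine (measure_union_le _ _).trans_lt ?_
            rw [aux_vol_image_add]
            exact ENNReal.add_lt_top.mpr ⟨hG.measure_lt_top, hG.measure_lt_top⟩
          have hnorm : ‖h‖ ≤ r := by simpa [hB₀, mem_closedBall, dist_eq_norm] using hh
          have htr : (volume (symmDiff ((fun x => x + h) '' G) G)).toReal ≤ C * r ^ α := by
            refine le_trans (hb h) ?_
            have hrr : ‖h‖ ^ α ≤ r ^ α := Real.rpow_le_rpow (norm_nonneg h) hnorm hα
            nlinarith
          calc volume (S ∩ ((fun x => x + h) '' G))
              ≤ volume (symmDiff ((fun x => x + h) '' G) G) := measure_mono hsub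
            _ ≤ ENNReal.ofReal (C * r ^ α) :=
                (ENNReal.le_ofReal_iff_toReal_le hfin (by positivity)).mpr htr
      _ = ENNReal.ofReal (C * r ^ α) * volume B₀ := setLIntegral_const _ _
  have key : ENNReal.ofReal c₁ * volume S ≤ ENNReal.ofReal (C * r ^ α) := by
    have hcomb := le_trans low up
    rw [mul_comm (ENNReal.ofReal c₁) (volume B₀), mul_assoc,
      mul_comm (ENNReal.ofReal (C * r ^ α)) (volume B₀)] at hcomb
    exact (ENNReal.mul_le_mul_iff_right hBpos.ne' hBfin).mp hcomb
  have hfinal : c₁ * (volume S).toReal ≤ C * r ^ α := by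
    have h1 := ENNReal.toReal_mono ENNReal.ofReal_ne_top key
    rwa [ENNReal.toReal_mul, ENNReal.toReal_ofReal hc₁.le,
      ENNReal.toReal_ofReal (by positivity)] at h1
  exact hfinal

end Aux

/-- If for all small `ε` the points `x ∈ G_ε \ G` with `ν(x,2ε) ≥ c₁` have measure at least
`c₂ |G_ε \ G|`, then `s(G) = α(G)`. -/
theorem surfReg_eq_holderReg_of_density {n : ℕ} (G : Set (EuclideanSpace ℝ (Fin n)))
    (hG : IsCompact G) (hpos : 0 < volume G) (c₁ c₂ ε₀ : ℝ)
    (hc₁ : 0 < c₁) (hc₂ : 0 < c₂) (hε₀ : 0 < ε₀)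
    (hcond : ∀ ε : ℝ, 0 < ε → ε < ε₀ →
      c₂ * (volume (cthickening ε G \ G)).toReal ≤
        (volume {x | x ∈ cthickening ε G \ G ∧ c₁ ≤ nuRatio G x (2 * ε)}).toReal) :
    surfReg G = holderReg G := by
  have hset : {s : ℝ | 0 ≤ s ∧ ∃ C : ℝ, 0 < C ∧ ∀ ε : ℝ, 0 < ε → ε ≤ 1 →
      (volume (cthickening ε G)).toReal - (volume G).toReal ≤ C * ε ^ s}
      = {α : ℝ | 0 ≤ α ∧ ∃ C : ℝ, 0 < C ∧ ∀ h : EuclideanSpace ℝ (Fin n),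
      (volume (symmDiff ((fun x => x + h) '' G) G)).toReal ≤ C * ‖h‖ ^ α} := by
    ext a
    simp only [Set.mem_setOf_eq]
    constructor
    · rintro ⟨ha, C, hC, hbd⟩
      exact ⟨ha, aux_S_subset_A G hG ha hC hbd⟩
    · rintro ⟨ha, C, hC, hbd⟩
      refine ⟨ha, ?_⟩
      set η : ℝ := min ε₀ 1 / 2 with hη
      have hηpos : 0 < η := by
        have : 0 < min ε₀ 1 := lt_min hε₀ one_pos
        positivity
      set K : ℝ := (volume (cthickening 1 G)).toReal with hK
      have hK0 : 0 ≤ K := ENNReal.toReal_nonneg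
      have hηα : 0 < η ^ a := Real.rpow_pos_of_pos hηpos a
      have ht1 : 0 < C * 2 ^ a / (c₁ * c₂) := by
        have : (0:ℝ) < 2 ^ a := Real.rpow_pos_of_pos two_pos a
        positivity
      have ht2 : 0 < (K + 1) / η ^ a := by positivity
      refine ⟨C * 2 ^ a / (c₁ * c₂) + (K + 1) / η ^ a, by positivity, ?_⟩
      intro ε hε hε1
      have hεα : 0 ≤ ε ^ a := (Real.rpow_pos_of_pos hε a).le
      rw [← aux_diff_toReal G hG]
      rcases lt_or_ge ε ε₀ with hcase | hcase
      · -- small ε: use the density hypothesis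
        have hdb := aux_density_bound G hG hc₁ hC ha hε hbd
        have hcd := hcond ε hε hcase
        have hd0 : 0 ≤ (volume (cthickening ε G \ G)).toReal := ENNReal.toReal_nonneg
        have hS0 : 0 ≤ (volume {x | x ∈ cthickening ε G \ G ∧
            c₁ ≤ nuRatio G x (2 * ε)}).toReal := ENNReal.toReal_nonneg
        have hmulr : (2 * ε) ^ a = 2 ^ a * ε ^ a := Real.mul_rpow (by norm_num) hε.le
        rw [hmulr] at hdb
        -- c₁ c₂ d ≤ c₁ S ≤ C 2^a ε^a
        have h1 : c₁ * (c₂ * (volume (cthickening ε G \ G)).toReal)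
            ≤ C * (2 ^ a * ε ^ a) := by
          calc c₁ * (c₂ * (volume (cthickening ε G \ G)).toReal)
              ≤ c₁ * (volume {x | x ∈ cthickening ε G \ G ∧
                  c₁ ≤ nuRatio G x (2 * ε)}).toReal :=
                mul_le_mul_of_nonneg_left hcd hc₁.le
            _ ≤ C * (2 ^ a * ε ^ a) := hdb
        have h2 : (volume (cthickening ε G \ G)).toReal
            ≤ (C * 2 ^ a / (c₁ * c₂)) * ε ^ a := by
          rw [div_mul_eq_mul_div, le_div_iff₀ (by positivity : (0:ℝ) < c₁ * c₂)]
          nlinarith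
        have h3 : 0 ≤ ((K + 1) / η ^ a) * ε ^ a := by positivity
        nlinarith
      · -- large ε: bound by a constant
        have hηε : η ≤ ε := by
          have h1 : min ε₀ 1 ≤ ε₀ := min_le_left _ _
          have : η < ε₀ := by
            rw [hη]; nlinarith [lt_min hε₀ one_pos]
          linarith
        have hd1 : (volume (cthickening ε G \ G)).toReal ≤ K := by
          refine ENNReal.toReal_mono hG.cthickening.measure_lt_top.ne ?_
          exact measure_mono (Set.diff_subset.trans (cthickening_mono hε1 G))
        have hrow : η ^ a ≤ ε ^ a := Real.rpow_le_rpow hηpos.le hηε ha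
        have h4 : K ≤ ((K + 1) / η ^ a) * ε ^ a := by
          have h5 : ((K + 1) / η ^ a) * η ^ a = K + 1 := div_mul_cancel₀ _ hηα.ne'
          nlinarith
        nlinarith
  unfold surfReg holderReg
  rw [hset]
end

section
/- Let M be an expanding n×n integer matrix, Δ a digit set for M with Q = G(M,Δ), and Λ ⊆ ℤⁿ a finite set with 0 ∈ Λ; let Γ = { ∑_{j=1}^∞ M^{−j} γ_j : γ_j ∈ Λ for all j }. Then each of the following two sets is an invariant set: (a) S₀ = { a ∈ ℤⁿ : |(a + Q) ∩ Γ| > 0 }, and (b) S̄₀ = { a ∈ ℤⁿ : (a + Q) ∩ Γ ≠ ∅ }. -/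
open MeasureTheory Metric Filter Set Pointwise

/-- The point of `EuclideanSpace ℝ (Fin n)` with the integer coordinates `a`. -/
noncomputable def intVec {n : ℕ} (a : Fin n → ℤ) : EuclideanSpace ℝ (Fin n) :=
  (EuclideanSpace.equiv (Fin n) ℝ).symm (fun i => (a i : ℝ))

/-- An integer matrix is expanding if all its (complex) eigenvalues have modulus `> 1`. -/
def IsExpanding {n : ℕ} (M : Matrix (Fin n) (Fin n) ℤ) : Prop :=
  ∀ μ : ℂ, (M.map (Int.cast : ℤ → ℂ)).charpoly.IsRoot μ → 1 < ‖μ‖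

/-- `D ⊆ ℤⁿ` is a digit set for `M`: `0 ∈ D`, `|D| = |det M|`, and the elements of `D` are
pairwise non-congruent modulo the sublattice `Mℤⁿ`. -/
def IsDigitSet {n : ℕ} (M : Matrix (Fin n) (Fin n) ℤ) (D : Finset (Fin n → ℤ)) : Prop :=
  0 ∈ D ∧ D.card = M.det.natAbs ∧
    ∀ d₁ ∈ D, ∀ d₂ ∈ D, (∃ z : Fin n → ℤ, d₁ - d₂ = M.mulVec z) → d₁ = d₂

/-- The attractor `G(M,D) = { ∑_{k=1}^∞ M^{-k} a_k : a_k ∈ D }`. -/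
noncomputable def attractor {n : ℕ} (M : Matrix (Fin n) (Fin n) ℤ) (D : Finset (Fin n → ℤ)) :
    Set (EuclideanSpace ℝ (Fin n)) :=
  {x | ∃ a : ℕ → (Fin n → ℤ), (∀ k, a k ∈ D) ∧
    x = (EuclideanSpace.equiv (Fin n) ℝ).symm
      (∑' k : ℕ, ((M.map (Int.cast : ℤ → ℝ))⁻¹ ^ (k + 1)).mulVec (fun i => ((a k i : ℝ))))}

/-- A set `S ⊆ ℤⁿ` is invariant (w.r.t. `M`, a set `Λ` and digits `Δ`) if for every `s ∈ S`,
`γ ∈ Λ`, `δ ∈ Δ`, whenever `M⁻¹(s + γ - δ)` is an integer point, it belongs to `S`. -/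
def IsInvariantSet {n : ℕ} (M : Matrix (Fin n) (Fin n) ℤ) (Λ Δ : Finset (Fin n → ℤ))
    (S : Set (Fin n → ℤ)) : Prop :=
  ∀ s ∈ S, ∀ γ ∈ Λ, ∀ δ ∈ Δ, ∀ x : Fin n → ℤ, M.mulVec x = s + γ - δ → x ∈ S

/-!
If `M x = s + γ - δ`, the map `φ_γ y = M⁻¹ (γ + y)` sends `(s + Q) ∩ Γ` into `(x + Q) ∩ Γ`:
on `Γ` it is one of the contractions of the iterated function system whose attractor is `Γ`,
and on `s + Q` it is `φ_γ (s + q) = x + φ_δ q` with `φ_δ` a contraction of the system defining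
`Q`. Since `φ_γ` is affine with Jacobian `|det M|⁻¹`, it preserves both nonemptiness and positive
measure. Expansiveness makes `M` invertible and, since by Gelfand's formula the powers of `M⁻¹`
are summable in norm, makes the series defining the attractors converge; this is what makes
each attractor invariant under the contractions of its system.
-/

open Matrix
open scoped NNReal ENNReal

attribute [local instance] Matrix.linftyOpNormedAddCommGroup Matrix.linftyOpNormedRing
  Matrix.linftyOpNormedAlgebra

theorem summable_norm_pow_of_spectralRadius_lt_one {A : Type*} [NormedRing A]
    [NormedAlgebra ℂ A] [CompleteSpace A] {a : A} (ha : spectralRadius ℂ a < 1) :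
    Summable fun k : ℕ => ‖a ^ k‖ := by
  obtain ⟨c, hρc, hc1⟩ := exists_between ha
  have hc : c ≠ ⊤ := ne_top_of_lt hc1
  refine .of_norm_bounded_eventually_nat (g := fun k => c.toReal ^ k)
    (summable_geometric_of_lt_one ENNReal.toReal_nonneg (ENNReal.toReal_lt_of_lt_ofReal
      (by simpa using hc1))) ?_
  filter_upwards [(spectrum.pow_norm_pow_one_div_tendsto_nhds_spectralRadius a).eventually_lt_const
    hρc, eventually_gt_atTop 0] with k hk hk0
  rw [ENNReal.ofReal_lt_iff_lt_toReal (by positivity) hc, one_div,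
    Real.rpow_inv_lt_iff_of_pos (norm_nonneg _) ENNReal.toReal_nonneg (by positivity),
    Real.rpow_natCast] at hk
  simpa using hk.le

theorem spectralRadius_lt_of_forall_nnnorm_lt {A : Type*} [NormedRing A]
    [NormedAlgebra ℂ A] [CompleteSpace A] {a : A} {r : ℝ≥0} (hr : 0 < r)
    (h : ∀ z ∈ spectrum ℂ a, ‖z‖₊ < r) : spectralRadius ℂ a < r := by
  rcases (spectrum ℂ a).eq_empty_or_nonempty with he | hne
  · simp [spectralRadius, he, hr]
  · exact spectrum.spectralRadius_lt_of_forall_lt_of_nonempty hne h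

theorem Matrix.linfty_opNorm_map_ofReal {m n : Type*} [Fintype m] [Fintype n]
    (B : Matrix m n ℝ) :
    ‖B.map ((↑) : ℝ → ℂ)‖ = ‖B‖ := by
  simp [Matrix.linfty_opNorm_def, Complex.nnnorm_real]

theorem Matrix.summable_pow_succ_mulVec {m : Type*} [Fintype m] [DecidableEq m]
    {A : Matrix m m ℝ} (hA : Summable fun k : ℕ => ‖A ^ k‖) {v : ℕ → m → ℝ} {C : ℝ}
    (hv : ∀ k, ‖v k‖ ≤ C) : Summable fun k => A ^ (k + 1) *ᵥ v k := by
  refine .of_norm_bounded (((summable_nat_add_iff 1).mpr hA).mul_right C) fun k => ?_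
  exact (Matrix.linfty_opNorm_mulVec _ _).trans
    (mul_le_mul_of_nonneg_left (hv k) (norm_nonneg _))

theorem Matrix.isUnit_det_map_intCast {m R : Type*} [Fintype m] [DecidableEq m] [Field R]
    [CharZero R] {M : Matrix m m ℤ} (h : M.det ≠ 0) : IsUnit (M.map (Int.cast : ℤ → R)).det := by
  rw [← Int.cast_det, isUnit_iff_ne_zero]
  exact_mod_cast h

namespace IsExpanding

variable {n : ℕ} {M : Matrix (Fin n) (Fin n) ℤ}

theorem det_ne_zero (hM : IsExpanding M) : M.det ≠ 0 := by
  intro h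
  have h0 : (0 : ℂ) ∈ spectrum ℂ (M.map (Int.cast : ℤ → ℂ)) := by
    rw [spectrum.zero_mem_iff, Matrix.isUnit_iff_isUnit_det, ← Int.cast_det, h]
    simp
  exact absurd (hM 0 (Matrix.mem_spectrum_iff_isRoot_charpoly.mp h0)) (by simp)

theorem norm_lt_one_of_mem_spectrum_inv (hM : IsExpanding M) {z : ℂ}
    (hz : z ∈ spectrum ℂ (M.map (Int.cast : ℤ → ℂ))⁻¹) : ‖z‖ < 1 := by
  have hu : IsUnit (M.map (Int.cast : ℤ → ℂ)) :=
    (Matrix.isUnit_iff_isUnit_det _).mpr (Matrix.isUnit_det_map_intCast hM.det_ne_zero)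
  rw [← hu.unit_spec, ← Matrix.coe_units_inv, ← spectrum.map_inv, Set.mem_inv] at hz
  have h := hM z⁻¹ (Matrix.mem_spectrum_iff_isRoot_charpoly.mp hz)
  rw [norm_inv] at h
  rcases eq_or_ne z 0 with rfl | hz0
  · simp
  · exact (one_lt_inv₀ (norm_pos_iff.mpr hz0)).mp h

theorem summable_norm_pow_inv (hM : IsExpanding M) :
    Summable fun k : ℕ => ‖(M.map (Int.cast : ℤ → ℝ))⁻¹ ^ k‖ := by
  have hinv : ((M.map (Int.cast : ℤ → ℝ))⁻¹).map ((↑) : ℝ → ℂ)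
      = (M.map (Int.cast : ℤ → ℂ))⁻¹ := by
    refine (Matrix.inv_eq_left_inv ?_).symm
    have hM' : Complex.ofRealHom.mapMatrix (M.map (Int.cast : ℤ → ℝ))
        = M.map (Int.cast : ℤ → ℂ) := by
      ext i j; simp
    have h := congrArg Complex.ofRealHom.mapMatrix (Matrix.nonsing_inv_mul _
      (Matrix.isUnit_det_map_intCast hM.det_ne_zero))
    rwa [map_mul, map_one, hM'] at h
  have hρ : spectralRadius ℂ (M.map (Int.cast : ℤ → ℂ))⁻¹ < 1 := by
    exact_mod_cast spectralRadius_lt_of_forall_nnnorm_lt one_pos fun z hz =>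
      (by exact_mod_cast hM.norm_lt_one_of_mem_spectrum_inv hz)
  refine (summable_norm_pow_of_spectralRadius_lt_one hρ).congr fun k => ?_
  rw [← hinv, ← Matrix.linfty_opNorm_map_ofReal]
  exact congrArg norm (map_pow Complex.ofRealHom.mapMatrix _ k).symm

end IsExpanding

theorem MeasureTheory.Measure.addHaar_image_linearMap_add_left {E : Type*}
    [NormedAddCommGroup E] [NormedSpace ℝ E] [MeasurableSpace E] [BorelSpace E]
    [FiniteDimensional ℝ E] (μ : Measure E) [μ.IsAddHaarMeasure] (f : E →ₗ[ℝ] E) (c : E)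
    (s : Set E) : μ ((fun y => f (c + y)) '' s) = ENNReal.ofReal |LinearMap.det f| * μ s := by
  rw [show (fun y => f (c + y)) = f ∘ (c + ·) from rfl, Set.image_comp,
    Measure.addHaar_image_linearMap, Set.image_add_left, measure_preimage_add]

theorem intVec_add {n : ℕ} (a b : Fin n → ℤ) : intVec (a + b) = intVec a + intVec b := by
  ext i; simp [intVec]

theorem intVec_sub {n : ℕ} (a b : Fin n → ℤ) : intVec (a - b) = intVec a - intVec b := by
  ext i; simp [intVec]

theorem intVec_mulVec {n : ℕ} (M : Matrix (Fin n) (Fin n) ℤ) (x : Fin n → ℤ) :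
    intVec (M *ᵥ x) = Matrix.toLpLin 2 2 (M.map (Int.cast : ℤ → ℝ)) (intVec x) := by
  ext i; simp [intVec, Matrix.mulVec, dotProduct]

/-- `y ↦ M⁻¹ (d + y)`, a branch of the iterated function system defining `attractor M D`. -/
noncomputable def ifsMap {n : ℕ} (M : Matrix (Fin n) (Fin n) ℤ) (d : Fin n → ℤ) :
    EuclideanSpace ℝ (Fin n) → EuclideanSpace ℝ (Fin n) := fun y =>
  Matrix.toLpLin 2 2 (M.map (Int.cast : ℤ → ℝ))⁻¹ (intVec d + y)

section ifsMap

variable {n : ℕ} {M : Matrix (Fin n) (Fin n) ℤ}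

theorem volume_image_ifsMap (d : Fin n → ℤ) (s : Set (EuclideanSpace ℝ (Fin n))) :
    volume (ifsMap M d '' s) = ENNReal.ofReal |(M.det : ℝ)|⁻¹ * volume s := by
  unfold ifsMap
  rw [Measure.addHaar_image_linearMap_add_left, Matrix.toLpLin_eq_toLin,
    LinearMap.det_toLin, Matrix.det_nonsing_inv, Ring.inverse_eq_inv', ← Int.cast_det, abs_inv]

theorem ifsMap_intVec_add (hdet : M.det ≠ 0) {s x γ δ : Fin n → ℤ} (hx : M *ᵥ x = s + γ - δ)
    (q : EuclideanSpace ℝ (Fin n)) :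
    ifsMap M γ (intVec s + q) = intVec x + ifsMap M δ q := by
  have hMA : (M.map (Int.cast : ℤ → ℝ))⁻¹ * M.map (Int.cast : ℤ → ℝ) = 1 :=
    Matrix.nonsing_inv_mul _ (Matrix.isUnit_det_map_intCast hdet)
  have hsplit : intVec γ + (intVec s + q) = intVec (M *ᵥ x) + (intVec δ + q) := by
    rw [hx, intVec_sub, intVec_add]; abel
  rw [ifsMap, ifsMap, hsplit, map_add, intVec_mulVec, ← LinearMap.comp_apply,
    ← Matrix.toLpLin_mul, hMA, Matrix.toLpLin_one, LinearMap.id_apply]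

theorem IsExpanding.ifsMap_mem_attractor (hM : IsExpanding M) {D : Finset (Fin n → ℤ)}
    {d : Fin n → ℤ} (hd : d ∈ D) {q : EuclideanSpace ℝ (Fin n)} (hq : q ∈ attractor M D) :
    ifsMap M d q ∈ attractor M D := by
  obtain ⟨a, ha, rfl⟩ := hq
  -- prepend `d` to the digit sequence of `q`
  set A := (M.map (Int.cast : ℤ → ℝ))⁻¹
  let b : ℕ → Fin n → ℤ := fun | 0 => d | k + 1 => a k
  refine ⟨b, by rintro (_ | k); exacts [hd, ha k], ?_⟩
  have hsum : HasSum (fun k => A ^ (k + 1) *ᵥ fun i => (a k i : ℝ))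
      (∑' k, A ^ (k + 1) *ᵥ fun i => (a k i : ℝ)) := by
    refine (Matrix.summable_pow_succ_mulVec hM.summable_norm_pow_inv
      (C := ∑ e ∈ D, ‖fun i => (e i : ℝ)‖) fun k => ?_).hasSum
    exact Finset.single_le_sum (f := fun e : Fin n → ℤ => ‖fun i => (e i : ℝ)‖)
      (fun _ _ => norm_nonneg _) (ha k)
  have htail : HasSum (fun k => A ^ (k + 1 + 1) *ᵥ fun i => (b (k + 1) i : ℝ))
      (A *ᵥ ∑' k, A ^ (k + 1) *ᵥ fun i => (a k i : ℝ)) := by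
    have h := hsum.mapL (Matrix.mulVecLin A).toContinuousLinearMap
    simp only [LinearMap.coe_toContinuousLinearMap', Matrix.mulVecLin_apply,
      Matrix.mulVec_mulVec, ← pow_succ'] at h
    exact h
  rw [(htail.zero_add (f := fun k => A ^ (k + 1) *ᵥ fun i => (b k i : ℝ))).tsum_eq]
  simp [ifsMap, intVec, b, A]

end ifsMap

theorem IsExpanding.mapsTo_ifsMap {n : ℕ} {M : Matrix (Fin n) (Fin n) ℤ} (hM : IsExpanding M)
    {Δ Λ : Finset (Fin n → ℤ)} {s x γ δ : Fin n → ℤ} (hγ : γ ∈ Λ) (hδ : δ ∈ Δ)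
    (hx : M *ᵥ x = s + γ - δ) :
    MapsTo (ifsMap M γ) (((fun y => intVec s + y) '' attractor M Δ) ∩ attractor M Λ)
      (((fun y => intVec x + y) '' attractor M Δ) ∩ attractor M Λ) := by
  rintro _ ⟨⟨q, hq, rfl⟩, hΓ⟩
  exact ⟨⟨ifsMap M δ q, hM.ifsMap_mem_attractor hδ hq,
    (ifsMap_intVec_add hM.det_ne_zero hx q).symm⟩, hM.ifsMap_mem_attractor hγ hΓ⟩

theorem isInvariantSet_S0_and_S0bar_general {n : ℕ} (M : Matrix (Fin n) (Fin n) ℤ)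
    (hM : IsExpanding M) (Δ : Finset (Fin n → ℤ))
    (Λ : Finset (Fin n → ℤ)) :
    IsInvariantSet M Λ Δ {a : Fin n → ℤ |
        0 < volume (((fun x => intVec a + x) '' attractor M Δ) ∩ attractor M Λ)} ∧
    IsInvariantSet M Λ Δ {a : Fin n → ℤ |
        (((fun x => intVec a + x) '' attractor M Δ) ∩ attractor M Λ).Nonempty} := by
  refine ⟨fun s hs γ hγ δ hδ x hx => ?_, fun s hs γ hγ δ hδ x hx => ?_⟩
  · have hdet : (M.det : ℝ) ≠ 0 := Int.cast_ne_zero.mpr hM.det_ne_zero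
    calc (0 : ℝ≥0∞)
        < ENNReal.ofReal |(M.det : ℝ)|⁻¹ * volume _ :=
          ENNReal.mul_pos (by simpa using hdet) hs.ne'
      _ = volume (ifsMap M γ '' _) := (volume_image_ifsMap γ _).symm
      _ ≤ _ := measure_mono (hM.mapsTo_ifsMap hγ hδ hx).image_subset
  · exact (hs.image _).mono (hM.mapsTo_ifsMap hγ hδ hx).image_subset

/-- Both `S₀ = {a : |(a+Q) ∩ Γ| > 0}` and `S̄₀ = {a : (a+Q) ∩ Γ ≠ ∅}` are invariant sets. -/
theorem isInvariantSet_S0_and_S0bar {n : ℕ} (M : Matrix (Fin n) (Fin n) ℤ)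
    (hM : IsExpanding M) (Δ : Finset (Fin n → ℤ)) (hΔ : IsDigitSet M Δ)
    (Λ : Finset (Fin n → ℤ)) (hΛ : (0 : Fin n → ℤ) ∈ Λ) :
    IsInvariantSet M Λ Δ {a : Fin n → ℤ |
        0 < volume (((fun x => intVec a + x) '' attractor M Δ) ∩ attractor M Λ)} ∧
    IsInvariantSet M Λ Δ {a : Fin n → ℤ |
        (((fun x => intVec a + x) '' attractor M Δ) ∩ attractor M Λ).Nonempty} :=
  isInvariantSet_S0_and_S0bar_general M hM Δ Λ
end

section
/- Let A_0, …, A_{m−1} be simple N×N real matrices, let W = { w ∈ ℝᴺ : ∑_{i=1}^N w_i = 0 }, and let U ⊆ W be a linear subspace with A_i U ⊆ U for all i. Then for every p ∈ [1, ∞), the L_p-spectral radius of the restrictions satisfies ρ_p(A_0|_U, …, A_{m−1}|_U) = ( ρ_1(A_0|_U, …, A_{m−1}|_U) )^{1/p}. -/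
open MeasureTheory Metric Filter Set Pointwise

/-- A matrix is simple if every column contains exactly one entry `1` and all other entries `0`. -/
def IsSimple {I : Type*} (T : Matrix I I ℝ) : Prop :=
  ∀ b, ∃ a, T a b = 1 ∧ ∀ a', a' ≠ a → T a' b = 0

/-- The subspace `W = { w : ∑ i, w i = 0 }`. -/
noncomputable def Wsub (I : Type*) [Fintype I] : Submodule ℝ (I → ℝ) :=
  LinearMap.ker ((∑ i : I, LinearMap.proj i) : (I → ℝ) →ₗ[ℝ] ℝ)

/-- The operator norm of the restriction of `T` to the subspace `U` (for `U` invariant under `T`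
this is the norm of `T|_U`). -/
noncomputable def opNormOn {I : Type*} [Fintype I] (U : Submodule ℝ (I → ℝ))
    (T : Matrix I I ℝ) : ℝ :=
  sSup {c : ℝ | ∃ u ∈ U, ‖u‖ ≤ 1 ∧ c = ‖T.mulVec u‖}

/-- The `L_p`-spectral radius of the family `A` of matrices restricted to the subspace `U`:
`ρ_p = lim_k ( m^{-k} ∑_{words w of length k} ‖(A_{w₁}⋯A_{w_k})|_U‖^p )^{1/(pk)}`. -/
noncomputable def lpRadiusOn {I ι : Type*} [Fintype I] [DecidableEq I] [Fintype ι]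
    (U : Submodule ℝ (I → ℝ)) (A : ι → Matrix I I ℝ) (p : ℝ) : ℝ :=
  limUnder Filter.atTop fun k : ℕ =>
    (((Fintype.card ι : ℝ) ^ k)⁻¹ *
      ∑ w : Fin k → ι, opNormOn U ((List.ofFn fun i => A (w i)).prod) ^ p) ^ (1 / (p * k))

open Topology Matrix

/-! Products of simple matrices are simple and there are only finitely many simple matrices, so
the norms `‖(A_w)|_U‖` of all word products take finitely many values: each is `0` or lies in a
fixed interval `[c, C]` with `c > 0`. Hence the sums `S_p(k) = ∑_{|w| = k} ‖(A_w)|_U‖^p` satisfy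
`c^(p-1) S_1(k) ≤ S_p(k) ≤ C^(p-1) S_1(k)`, and these constant factors disappear under `k`-th
roots. The `k`-th roots of `S_1(k)` converge by Fekete's lemma: `S_1` is submultiplicative, and
either it vanishes from some `k` on or it is bounded below by `c`. -/

theorem Set.Finite.exists_pos_bounds {s : Set ℝ} (hs : s.Finite) :
    ∃ c C : ℝ, 0 < c ∧ 0 < C ∧ ∀ x ∈ s, x ≤ C ∧ (0 < x → c ≤ x) := by
  obtain ⟨C, hC⟩ := hs.bddAbove
  have hC' : ∀ x ∈ s, x ≤ max C 1 := fun x hx => (hC hx).trans (le_max_left _ _)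
  rcases (s ∩ Ioi 0).eq_empty_or_nonempty with h | h
  · exact ⟨1, max C 1, one_pos, by positivity, fun x hx =>
      ⟨hC' x hx, fun hx0 => (h.subset ⟨hx, hx0⟩).elim⟩⟩
  · obtain ⟨c, ⟨-, hc⟩, hmin⟩ := Set.exists_min_image _ id (hs.inter_of_left _) h
    exact ⟨c, max C 1, hc, by positivity, fun x hx => ⟨hC' x hx, fun hx0 => hmin x ⟨hx, hx0⟩⟩⟩

namespace Real

theorem rpow_sub_one_mul_le_rpow {c x p : ℝ} (hc : 0 < c) (hcx : c ≤ x) (hp : 1 ≤ p) :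
    c ^ (p - 1) * x ≤ x ^ p := by
  have hx : 0 < x := hc.trans_le hcx
  calc c ^ (p - 1) * x ≤ x ^ (p - 1) * x := by gcongr
    _ = x ^ p := by rw [← rpow_add_one hx.ne', sub_add_cancel]

theorem rpow_le_rpow_sub_one_mul {x C p : ℝ} (hx : 0 ≤ x) (hxC : x ≤ C) (hp : 1 ≤ p) :
    x ^ p ≤ C ^ (p - 1) * x := by
  rcases hx.eq_or_lt with rfl | hx
  · rw [zero_rpow (by linarith), mul_zero]
  calc x ^ p = x ^ (p - 1) * x := by rw [← rpow_add_one hx.ne', sub_add_cancel]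
    _ ≤ C ^ (p - 1) * x := by gcongr

theorem tendsto_rpow_one_div_natCast {c : ℝ} (hc : 0 < c) :
    Tendsto (fun k : ℕ => c ^ (1 / k : ℝ)) atTop (𝓝 1) := by
  simpa [Function.comp_def] using
    (continuousAt_const_rpow hc.ne').tendsto.comp tendsto_one_div_atTop_nhds_zero_nat

end Real

section Fekete

variable {u : ℕ → ℝ}

theorem eq_zero_of_submultiplicative (h0 : ∀ k, 0 ≤ u k) (hmul : ∀ k l, u (k + l) ≤ u k * u l)
    {k₀ k : ℕ} (hk₀ : u k₀ = 0) (hk : k₀ ≤ k) : u k = 0 := by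
  obtain ⟨l, rfl⟩ := Nat.exists_eq_add_of_le hk
  exact le_antisymm (by simpa [hk₀] using hmul k₀ l) (h0 _)

theorem exists_tendsto_rpow_one_div_of_submultiplicative_of_le {δ : ℝ} (hδ : 0 < δ)
    (hδu : ∀ k, δ ≤ u k) (hmul : ∀ k l, u (k + l) ≤ u k * u l) :
    ∃ ρ, Tendsto (fun k : ℕ => u k ^ (1 / k : ℝ)) atTop (𝓝 ρ) := by
  have hu : ∀ k, 0 < u k := fun k => hδ.trans_le (hδu k)
  have hsub : Subadditive fun k => Real.log (u k) := fun k l => by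
    rw [← Real.log_mul (hu k).ne' (hu l).ne']
    exact Real.log_le_log (hu _) (hmul k l)
  have hbdd : BddBelow (range fun k : ℕ => Real.log (u k) / k) := by
    refine ⟨min 0 (Real.log δ), ?_⟩
    rintro _ ⟨k, rfl⟩
    rcases Nat.eq_zero_or_pos k with rfl | hk
    · simp
    have hk' : (1 : ℝ) ≤ k := by exact_mod_cast hk
    rw [le_div_iff₀ (by positivity)]
    calc min 0 (Real.log δ) * k ≤ min 0 (Real.log δ) := by nlinarith [min_le_left 0 (Real.log δ)]
      _ ≤ Real.log (u k) := (min_le_right _ _).trans (Real.log_le_log hδ (hδu k))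
  refine ⟨Real.exp hsub.lim, ((Real.continuous_exp.tendsto _).comp
    (hsub.tendsto_lim hbdd)).congr fun k => ?_⟩
  simp [Real.rpow_def_of_pos (hu k), div_eq_mul_inv]

theorem exists_tendsto_rpow_one_div_of_submultiplicative {δ : ℝ} (hδ : 0 < δ)
    (h0 : ∀ k, 0 ≤ u k) (hgap : ∀ k, u k ≠ 0 → δ ≤ u k)
    (hmul : ∀ k l, u (k + l) ≤ u k * u l) :
    ∃ ρ, Tendsto (fun k : ℕ => u k ^ (1 / k : ℝ)) atTop (𝓝 ρ) := by
  by_cases hzero : ∃ k₀, u k₀ = 0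
  · obtain ⟨k₀, hk₀⟩ := hzero
    refine ⟨0, tendsto_const_nhds.congr' ?_⟩
    filter_upwards [eventually_ge_atTop (max k₀ 1)] with k hk
    have hk1 : (0 : ℝ) < k := by exact_mod_cast le_of_max_le_right hk
    rw [eq_zero_of_submultiplicative h0 hmul hk₀ (le_of_max_le_left hk),
      Real.zero_rpow (one_div_ne_zero hk1.ne')]
  · simp only [not_exists] at hzero
    exact exists_tendsto_rpow_one_div_of_submultiplicative_of_le hδ (fun k => hgap k (hzero k)) hmul

end Fekete

theorem Filter.Tendsto.rpow_one_div_of_le_of_le {x y : ℕ → ℝ} {c C ρ : ℝ} (hc : 0 < c)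
    (hC : 0 < C) (hx : ∀ k, 0 ≤ x k) (hcxy : ∀ k, c * x k ≤ y k) (hyCx : ∀ k, y k ≤ C * x k)
    (h : Tendsto (fun k : ℕ => x k ^ (1 / k : ℝ)) atTop (𝓝 ρ)) :
    Tendsto (fun k : ℕ => y k ^ (1 / k : ℝ)) atTop (𝓝 ρ) := by
  have hscale : ∀ {a : ℝ}, 0 < a → Tendsto (fun k : ℕ => (a * x k) ^ (1 / k : ℝ)) atTop (𝓝 ρ) :=
    fun {a} ha => by
      simpa [Real.mul_rpow ha.le (hx _)] using (Real.tendsto_rpow_one_div_natCast ha).mul h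
  refine tendsto_of_tendsto_of_tendsto_of_le_of_le (hscale hc) (hscale hC) (fun k => ?_)
    fun k => ?_
  · exact Real.rpow_le_rpow (by positivity [hx k]) (hcxy k) (by positivity)
  · exact Real.rpow_le_rpow ((mul_nonneg hc.le (hx k)).trans (hcxy k)) (hyCx k) (by positivity)

section SimpleMatrix

variable {I : Type*}

theorem isSimple_one [DecidableEq I] : IsSimple (1 : Matrix I I ℝ) :=
  fun b => ⟨b, by simp, fun a h => by simp [h]⟩

theorem IsSimple.mul [Fintype I] {S T : Matrix I I ℝ} (hS : IsSimple S) (hT : IsSimple T) :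
    IsSimple (S * T) := by
  intro b
  obtain ⟨j, hj1, hj0⟩ := hT b
  obtain ⟨a, ha1, ha0⟩ := hS j
  have hcol : ∀ a', (S * T) a' b = S a' j := fun a' => by
    rw [Matrix.mul_apply, Finset.sum_eq_single j (fun j' _ hj' => by rw [hj0 j' hj', mul_zero])
      (fun h => (h (Finset.mem_univ j)).elim), hj1, mul_one]
  exact ⟨a, by rw [hcol, ha1], fun a' h => by rw [hcol, ha0 a' h]⟩

theorem IsSimple.list_prod [Fintype I] [DecidableEq I] {L : List (Matrix I I ℝ)}
    (h : ∀ M ∈ L, IsSimple M) :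
    IsSimple L.prod := by
  induction L with
  | nil => exact isSimple_one
  | cons M L ih =>
    exact (h M List.mem_cons_self).mul (ih fun M' hM' => h M' (List.mem_cons_of_mem _ hM'))

theorem finite_setOf_isSimple [Finite I] [DecidableEq I] :
    {T : Matrix I I ℝ | IsSimple T}.Finite := by
  refine (Set.finite_range fun σ : I → I => Matrix.of fun a b => if σ b = a then (1 : ℝ) else 0)
    |>.subset fun T hT => ?_
  choose σ h1 h0 using hT
  refine ⟨σ, Matrix.ext fun a b => ?_⟩
  by_cases h : σ b = a
  · subst h; simp [h1]
  · simp [h, h0 b a (Ne.symm h)]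

end SimpleMatrix

section OpNormOn

variable {I : Type*} [Fintype I] (U : Submodule ℝ (I → ℝ))

theorem opNormOn_bddAbove (T : Matrix I I ℝ) :
    BddAbove {c : ℝ | ∃ u ∈ U, ‖u‖ ≤ 1 ∧ c = ‖T *ᵥ u‖} := by
  refine ⟨‖LinearMap.toContinuousLinearMap T.mulVecLin‖, ?_⟩
  rintro _ ⟨u, -, hu, rfl⟩
  exact (LinearMap.toContinuousLinearMap T.mulVecLin).le_of_opNorm_le_of_le le_rfl hu |>.trans_eq
    (mul_one _)

theorem opNormOn_nonneg (T : Matrix I I ℝ) : 0 ≤ opNormOn U T :=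
  le_csSup (opNormOn_bddAbove U T) ⟨0, U.zero_mem, by simp, by simp⟩

theorem norm_mulVec_le_opNormOn (T : Matrix I I ℝ) {u : I → ℝ} (hu : u ∈ U) :
    ‖T *ᵥ u‖ ≤ opNormOn U T * ‖u‖ := by
  rcases eq_or_ne u 0 with rfl | hne
  · simp
  have hpos : 0 < ‖u‖ := norm_pos_iff.2 hne
  have hunit : ‖‖u‖⁻¹ • u‖ ≤ 1 := by rw [norm_smul, norm_inv, norm_norm, inv_mul_cancel₀ hpos.ne']
  have h := le_csSup (opNormOn_bddAbove U T) ⟨_, U.smul_mem _ hu, hunit, rfl⟩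
  rw [Matrix.mulVec_smul, norm_smul, norm_inv, norm_norm, inv_mul_le_iff₀ hpos] at h
  rwa [mul_comm] at h

theorem opNormOn_le {T : Matrix I I ℝ} {c : ℝ} (h : ∀ u ∈ U, ‖u‖ ≤ 1 → ‖T *ᵥ u‖ ≤ c) :
    opNormOn U T ≤ c :=
  csSup_le ⟨0, 0, U.zero_mem, by simp, by simp⟩ fun _ ⟨u, hu, h1, he⟩ => he ▸ h u hu h1

theorem opNormOn_mul_le {S T : Matrix I I ℝ} (hT : ∀ u ∈ U, T *ᵥ u ∈ U) :
    opNormOn U (S * T) ≤ opNormOn U S * opNormOn U T :=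
  opNormOn_le U fun u hu h1 => by
    rw [← Matrix.mulVec_mulVec]
    calc ‖S *ᵥ (T *ᵥ u)‖ ≤ opNormOn U S * ‖T *ᵥ u‖ := norm_mulVec_le_opNormOn U S (hT u hu)
      _ ≤ opNormOn U S * (opNormOn U T * 1) := by
        gcongr
        · exact opNormOn_nonneg U S
        · exact (norm_mulVec_le_opNormOn U T hu).trans (by gcongr; exact opNormOn_nonneg U T)
      _ = opNormOn U S * opNormOn U T := by rw [mul_one]

end OpNormOn

section Words

variable {I ι : Type*} [Fintype I] [DecidableEq I] (U : Submodule ℝ (I → ℝ))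
  (A : ι → Matrix I I ℝ)

def wordProd {k : ℕ} (w : Fin k → ι) : Matrix I I ℝ := (List.ofFn fun i => A (w i)).prod

theorem wordProd_append {k l : ℕ} (w₁ : Fin k → ι) (w₂ : Fin l → ι) :
    wordProd A (Fin.append w₁ w₂) = wordProd A w₁ * wordProd A w₂ := by
  rw [wordProd, wordProd, wordProd, ← List.prod_append, ← List.ofFn_fin_append]
  congr 2
  funext i
  refine Fin.addCases (fun i => ?_) (fun i => ?_) i <;> simp

theorem isSimple_wordProd (hA : ∀ i, IsSimple (A i)) {k : ℕ} (w : Fin k → ι) :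
    IsSimple (wordProd A w) :=
  IsSimple.list_prod fun M hM => by
    obtain ⟨i, rfl⟩ := List.mem_ofFn.1 hM
    exact hA _

theorem wordProd_mulVec_mem (hU : ∀ i, ∀ u ∈ U, A i *ᵥ u ∈ U) {k : ℕ} (w : Fin k → ι) :
    ∀ u ∈ U, wordProd A w *ᵥ u ∈ U := by
  induction k with
  | zero => simp [wordProd]
  | succ k ih =>
    intro u hu
    rw [wordProd, List.ofFn_succ, List.prod_cons, ← Matrix.mulVec_mulVec]
    exact hU _ _ (ih (fun i => w i.succ) u hu)

theorem exists_bounds_opNormOn_wordProd (hA : ∀ i, IsSimple (A i)) :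
    ∃ c C : ℝ, 0 < c ∧ 0 < C ∧ ∀ {k : ℕ} (w : Fin k → ι),
      opNormOn U (wordProd A w) ≤ C ∧
        (0 < opNormOn U (wordProd A w) → c ≤ opNormOn U (wordProd A w)) :=
  let ⟨c, C, hc, hC, h⟩ := (finite_setOf_isSimple.image (opNormOn U)).exists_pos_bounds
  ⟨c, C, hc, hC, fun w => h _ (mem_image_of_mem _ (isSimple_wordProd A hA w))⟩

variable [Fintype ι]

noncomputable def normPowSum (p : ℝ) (k : ℕ) : ℝ := ∑ w : Fin k → ι, opNormOn U (wordProd A w) ^ p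

theorem normPowSum_nonneg (p : ℝ) (k : ℕ) : 0 ≤ normPowSum U A p k :=
  Finset.sum_nonneg fun _ _ => Real.rpow_nonneg (opNormOn_nonneg U _) p

theorem normPowSum_add_le (hU : ∀ i, ∀ u ∈ U, A i *ᵥ u ∈ U) {p : ℝ} (hp : 0 ≤ p) (k l : ℕ) :
    normPowSum U A p (k + l) ≤ normPowSum U A p k * normPowSum U A p l := by
  rw [normPowSum, ← (Fin.appendEquiv k l).sum_comp, Fintype.sum_prod_type, normPowSum,
    normPowSum, Finset.sum_mul_sum]
  gcongr with w₁ _ w₂ _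
  change opNormOn U (wordProd A (Fin.append w₁ w₂)) ^ p ≤ _
  rw [wordProd_append, ← Real.mul_rpow (opNormOn_nonneg U _) (opNormOn_nonneg U _)]
  gcongr
  · exact opNormOn_nonneg U _
  · exact opNormOn_mul_le U (wordProd_mulVec_mem U A hU w₂)

variable {U A} {k : ℕ}

theorem le_normPowSum_one_of_ne_zero {c : ℝ}
    (hcA : ∀ w : Fin k → ι, 0 < opNormOn U (wordProd A w) → c ≤ opNormOn U (wordProd A w))
    (h : normPowSum U A 1 k ≠ 0) : c ≤ normPowSum U A 1 k := by
  obtain ⟨w, -, hw⟩ := Finset.exists_ne_zero_of_sum_ne_zero h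
  rw [Real.rpow_one] at hw
  calc c ≤ opNormOn U (wordProd A w) := hcA w ((opNormOn_nonneg U _).lt_of_ne' hw)
    _ = opNormOn U (wordProd A w) ^ (1 : ℝ) := (Real.rpow_one _).symm
    _ ≤ normPowSum U A 1 k := Finset.single_le_sum
          (fun v _ => Real.rpow_nonneg (opNormOn_nonneg U _) _) (Finset.mem_univ w)

theorem rpow_sub_one_mul_normPowSum_one_le {c p : ℝ} (hc : 0 < c) (hp : 1 ≤ p)
    (hcA : ∀ w : Fin k → ι, 0 < opNormOn U (wordProd A w) → c ≤ opNormOn U (wordProd A w)) :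
    c ^ (p - 1) * normPowSum U A 1 k ≤ normPowSum U A p k := by
  rw [normPowSum, normPowSum, Finset.mul_sum]
  gcongr with w
  rw [Real.rpow_one]
  rcases (opNormOn_nonneg U (wordProd A w)).eq_or_lt with h | h
  · rw [← h, mul_zero, Real.zero_rpow (by linarith)]
  · exact Real.rpow_sub_one_mul_le_rpow hc (hcA w h) hp

theorem normPowSum_le_rpow_sub_one_mul {C p : ℝ} (hp : 1 ≤ p)
    (hAC : ∀ w : Fin k → ι, opNormOn U (wordProd A w) ≤ C) :
    normPowSum U A p k ≤ C ^ (p - 1) * normPowSum U A 1 k := by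
  rw [normPowSum, normPowSum, Finset.mul_sum]
  gcongr with w
  rw [Real.rpow_one]
  exact Real.rpow_le_rpow_sub_one_mul (opNormOn_nonneg U _) (hAC w) hp

theorem lpRadiusOn_eq_of_tendsto {p σ : ℝ} (hp : 0 < p)
    (h : Tendsto (fun k : ℕ => normPowSum U A p k ^ (1 / k : ℝ)) atTop (𝓝 σ)) :
    lpRadiusOn U A p = ((Fintype.card ι : ℝ)⁻¹ * σ) ^ (1 / p) := by
  have hnormalized : Tendsto (fun k : ℕ => (((Fintype.card ι : ℝ) ^ k)⁻¹ * normPowSum U A p k)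
      ^ (1 / k : ℝ)) atTop (𝓝 ((Fintype.card ι : ℝ)⁻¹ * σ)) := by
    refine (tendsto_const_nhds.mul h).congr' ?_
    filter_upwards [eventually_ne_atTop 0] with k hk
    rw [Real.mul_rpow (by positivity) (normPowSum_nonneg U A p k), ← inv_pow, one_div,
      Real.pow_rpow_inv_natCast (by positivity) hk]
  refine Tendsto.limUnder_eq <|
    ((Real.continuous_rpow_const (by positivity)).tendsto _).comp hnormalized |>.congr fun k => ?_
  rw [Function.comp_apply, ← Real.rpow_mul (by positivity [normPowSum_nonneg U A p k]),
    one_div_mul_one_div, mul_comm (k : ℝ)]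
  rfl

end Words

theorem lpRadiusOn_eq_rpow_of_simple_general {N m : ℕ} (A : Fin m → Matrix (Fin N) (Fin N) ℝ)
    (hA : ∀ i, IsSimple (A i)) (U : Submodule ℝ (Fin N → ℝ))
    (hU : ∀ i, ∀ u ∈ U, (A i).mulVec u ∈ U) (p : ℝ) (hp : 1 ≤ p) :
    lpRadiusOn U A p = lpRadiusOn U A 1 ^ (1 / p) := by
  obtain ⟨c, C, hc, hC, hbounds⟩ := exists_bounds_opNormOn_wordProd U A hA
  obtain ⟨σ, hσ⟩ := exists_tendsto_rpow_one_div_of_submultiplicative hc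
    (normPowSum_nonneg U A 1) (fun k => le_normPowSum_one_of_ne_zero fun w => (hbounds w).2)
    (normPowSum_add_le U A hU zero_le_one)
  have hσp := hσ.rpow_one_div_of_le_of_le (Real.rpow_pos_of_pos hc (p - 1))
    (Real.rpow_pos_of_pos hC (p - 1)) (normPowSum_nonneg U A 1)
    (fun k => rpow_sub_one_mul_normPowSum_one_le hc hp fun w => (hbounds w).2)
    (fun k => normPowSum_le_rpow_sub_one_mul hp fun w => (hbounds w).1)
  rw [lpRadiusOn_eq_of_tendsto (by linarith) hσp, lpRadiusOn_eq_of_tendsto one_pos hσ, div_one,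
    Real.rpow_one]

/-- For simple matrices and an invariant subspace `U ⊆ W`,
`ρ_p(A|_U) = (ρ_1(A|_U))^{1/p}` for every `p ∈ [1, ∞)`. -/
theorem lpRadiusOn_eq_rpow_of_simple {N m : ℕ} (A : Fin m → Matrix (Fin N) (Fin N) ℝ)
    (hA : ∀ i, IsSimple (A i)) (U : Submodule ℝ (Fin N → ℝ)) (hUW : U ≤ Wsub (Fin N))
    (hU : ∀ i, ∀ u ∈ U, (A i).mulVec u ∈ U) (p : ℝ) (hp : 1 ≤ p) :
    lpRadiusOn U A p = lpRadiusOn U A 1 ^ (1 / p) :=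
  lpRadiusOn_eq_rpow_of_simple_general A hA U hU p hp
end

section
/- Let P ⊂ ℝ be a union of finitely many pairwise disjoint closed segments with integer endpoints. Suppose there exist finitely many real numbers t₁, …, t_s such that the translates P + t₁, …, P + t_s pairwise intersect in sets of Lebesgue measure zero and their union coincides, up to a set of Lebesgue measure zero, with a closed segment. Then all the segments composing P have the same length ℓ, and the gap between any two consecutive segments of P is a nonnegative integer multiple of ℓ. -/
open MeasureTheory Metric Filter Set Pointwise

open Finset in
theorem intTiling : ∀ (N : ℕ) (A T : Finset ℤ) (D : ℤ),
    A.card ≤ N →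
    A.Nonempty → T.Nonempty →
    (∀ a ∈ A, 0 ≤ a) → (∀ t ∈ T, 0 ≤ t) →
    (∀ a ∈ A, ∀ t ∈ T, a + t < D) →
    (∀ z : ℤ, 0 ≤ z → z < D → ∃ a ∈ A, ∃ t ∈ T, a + t = z) →
    (∀ a ∈ A, ∀ a' ∈ A, ∀ t ∈ T, ∀ t' ∈ T, a + t = a' + t' → a = a' ∧ t = t') →
    ∃ ℓ : ℤ, 0 < ℓ ∧ ∃ B : Finset ℤ, (∀ b ∈ B, b + 1 ∉ B) ∧
      (∀ z : ℤ, z ∈ A ↔ ∃ b ∈ B, ℓ * b ≤ z ∧ z < ℓ * b + ℓ) := by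
  intro N
  induction N with
  | zero =>
      intro A T D hcard hA _ _ _ _ _ _
      exact absurd (Finset.card_pos.mpr hA) (by omega)
  | succ M IHM =>
      intro A T D hcard hAne hTne hA0 hT0 hbound hcover hpack
      have hD : 0 < D := by
        obtain ⟨α, hα⟩ := hAne; obtain ⟨τ, hτ⟩ := hTne
        have h1 := hbound α hα τ hτ; have h2 := hA0 α hα; have h3 := hT0 τ hτ; omega
      have h0AT : (0:ℤ) ∈ A ∧ (0:ℤ) ∈ T := by
        obtain ⟨α, hα, τ, hτ, h⟩ := hcover 0 le_rfl hD
        have h2 := hA0 α hα; have h3 := hT0 τ hτ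
        have e1 : α = 0 := by omega
        have e2 : τ = 0 := by omega
        exact ⟨e1 ▸ hα, e2 ▸ hτ⟩
      obtain ⟨h0A, h0T⟩ := h0AT
      by_cases hTpos : ∃ t ∈ T, 0 < t
      · -- main case : T has a positive element
        obtain ⟨t₀, ht₀, ht₀pos⟩ := hTpos
        have hfne : (T.filter (fun t => 0 < t)).Nonempty := ⟨t₀, Finset.mem_filter.mpr ⟨ht₀, ht₀pos⟩⟩
        set n : ℤ := (T.filter (fun t => 0 < t)).min' hfne with hndef
        have hnT : n ∈ T := (Finset.mem_filter.mp (Finset.min'_mem _ hfne)).1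
        have hnpos : 0 < n := (Finset.mem_filter.mp (Finset.min'_mem _ hfne)).2
        have hnmin : ∀ t ∈ T, 0 < t → n ≤ t := fun τ h1 h2 =>
          Finset.min'_le _ _ (Finset.mem_filter.mpr ⟨h1, h2⟩)
        have hfirst : ∀ y : ℤ, 0 ≤ y → y < n → y ∈ A := by
          intro y h0 h1
          have hnD : n < D := by have := hbound 0 h0A n hnT; omega
          obtain ⟨α, hα, τ, hτ, h⟩ := hcover y h0 (by omega)
          have hτ0 : τ = 0 := by
            by_contra hne
            have h2 : 0 < τ := lt_of_le_of_ne (hT0 τ hτ) (Ne.symm hne)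
            have h3 := hnmin τ hτ h2
            have h4 := hA0 α hα; omega
          have e : α = y := by omega
          exact e ▸ hα
        rcases eq_or_lt_of_le (show (1:ℤ) ≤ n by omega) with hn1 | hn2
        · -- n = 1
          refine ⟨1, one_pos, A, ?_, ?_⟩
          · intro β hβ hc
            have h1T : (1:ℤ) ∈ T := by rw [hn1]; exact hnT
            have := hpack (β+1) hc β hβ 0 h0T 1 h1T (by omega)
            omega
          · intro z
            constructor
            · intro hz; exact ⟨z, hz, by omega, by omega⟩
            · rintro ⟨β, hβ, h1, h2⟩
              have : z = β := by omega
              exact this ▸ hβ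
        · -- n ≥ 2
          have key : ∀ x : ℤ, 0 < x → x < D → ¬ (n ∣ x) →
              ∀ a ∈ A, ∀ t ∈ T, a + t = x - 1 → a + 1 ∈ A := by
            suffices H : ∀ (K : ℕ), ∀ x : ℤ, x ≤ (K:ℤ) → 0 < x → x < D → ¬ (n ∣ x) →
                ∀ a ∈ A, ∀ t ∈ T, a + t = x - 1 → a + 1 ∈ A by
              intro x hx0
              exact H x.toNat x (Int.self_le_toNat x) hx0
            intro K
            induction K with
            | zero => intro x hxle hx0; omega
            | succ K IH =>
                intro x hxle hx0 hxD hnx a ha t ht hat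
                have IH2 : ∀ y : ℤ, y < x → 0 < y → ¬ (n ∣ y) →
                    ∀ a ∈ A, ∀ t ∈ T, a + t = y - 1 → a + 1 ∈ A := by
                  intro y hy hy0 hnd
                  exact IH y (by omega) hy0 (by omega) hnd
                have L3 : ∀ τ ∈ T, 0 < τ → τ < x → n ∣ τ := by
                  intro τ hτ hτ0 hτx
                  by_contra hnd
                  obtain ⟨a', ha', t', ht', h'⟩ := hcover (τ - 1) (by omega)
                    (by have := hbound 0 h0A τ hτ; omega)
                  have h1 : a' + 1 ∈ A := IH2 τ hτx hτ0 hnd a' ha' t' ht' h'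
                  have h2 := hpack (a'+1) h1 0 h0A t' ht' τ hτ (by omega)
                  have := hA0 a' ha'; omega
                have Lback : ∀ α ∈ A, 0 < α → α < x → ¬ (n ∣ α) → α - 1 ∈ A := by
                  intro α hα hα0 hαx hnd
                  obtain ⟨a', ha', t', ht', h'⟩ := hcover (α - 1) (by omega)
                    (by have := hbound α hα 0 h0T; omega)
                  have h1 : a' + 1 ∈ A := IH2 α hαx hα0 hnd a' ha' t' ht' h'
                  have h2 := hpack (a'+1) h1 α hα t' ht' 0 h0T (by omega)
                  have e : α - 1 = a' := by omega
                  exact e ▸ ha'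
                by_contra h1
                have ht0 : t = 0 := by
                  by_contra htne
                  have htpos : 0 < t := lt_of_le_of_ne (hT0 t ht) (Ne.symm htne)
                  have hnt : n ∣ t := L3 t ht htpos (by have := hA0 a ha; omega)
                  apply h1
                  have hy0 : 0 < a + 1 := by have := hA0 a ha; omega
                  have hnd : ¬ (n ∣ (a + 1)) := by
                    intro hd
                    exact hnx (by
                      have e : x = (a+1) + t := by omega
                      rw [e]; exact dvd_add hd hnt)
                  exact IH2 (a+1) (by omega) hy0 hnd a ha 0 h0T (by omega)
                have hax : a = x - 1 := by omega
                obtain ⟨a', ha', t', ht', h'⟩ := hcover x (by omega) hxD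
                have ht'0 : 0 < t' := by
                  rcases eq_or_lt_of_le (hT0 t' ht') with h | h
                  · exfalso; apply h1
                    have e : a + 1 = a' := by omega
                    exact e ▸ ha'
                  · exact h
                rcases lt_or_eq_of_le (show t' ≤ x by have := hA0 a' ha'; omega) with hlt | heq
                · have hnt' : n ∣ t' := L3 t' ht' ht'0 hlt
                  have ha'pos : 0 < a' := by omega
                  have hnda' : ¬ (n ∣ a') := by
                    intro hd
                    exact hnx (by
                      have e : x = a' + t' := h'.symm
                      rw [e]; exact dvd_add hd hnt')
                  have h2 : a' - 1 ∈ A := Lback a' ha' ha'pos (by omega) hnda'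
                  have h3 := hpack (a'-1) h2 a ha t' ht' t ht (by omega)
                  omega
                · have hxT : x ∈ T := heq ▸ ht'
                  have hn1A : n - 1 ∈ A := hfirst (n-1) (by omega) (by omega)
                  have h2 := hpack a ha (n-1) hn1A n hnT x hxT (by omega)
                  exact hnx ⟨1, by omega⟩
          -- global consequences
          have Tdvd : ∀ t ∈ T, n ∣ t := by
            intro τ hτ
            rcases eq_or_lt_of_le (hT0 τ hτ) with h | hpos
            · exact h ▸ dvd_zero n
            · by_contra hnd
              obtain ⟨a', ha', t', ht', h'⟩ := hcover (τ - 1) (by omega)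
                (by have := hbound 0 h0A τ hτ; omega)
              have h1 : a' + 1 ∈ A := key τ hpos (by have := hbound 0 h0A τ hτ; omega) hnd a' ha' t' ht' h'
              have h2 := hpack (a'+1) h1 0 h0A t' ht' τ hτ (by omega)
              have := hA0 a' ha'; omega
          have Afwd : ∀ α ∈ A, ¬ (n ∣ (α + 1)) → α + 1 ∈ A := by
            intro α hα hnd
            have hbd : α + 1 < D := by have := hbound α hα n hnT; omega
            exact key (α+1) (by have := hA0 α hα; omega) hbd hnd α hα 0 h0T (by omega)
          have Aback : ∀ α ∈ A, ¬ (n ∣ α) → α - 1 ∈ A := by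
            intro α hα hnd
            have hα0 : 0 < α := by
              rcases eq_or_lt_of_le (hA0 α hα) with h | h
              · exact absurd (h ▸ dvd_zero n) hnd
              · exact h
            have hαD : α < D := by have := hbound α hα 0 h0T; omega
            obtain ⟨a', ha', t', ht', h'⟩ := hcover (α - 1) (by omega) (by omega)
            have h1 : a' + 1 ∈ A := key α hα0 hαD hnd a' ha' t' ht' h'
            have h2 := hpack (a'+1) h1 α hα t' ht' 0 h0T (by omega)
            have e : α - 1 = a' := by omega
            exact e ▸ ha'
          have hno : ∀ w q : ℤ, n*q < w → w < n*q + n → ¬ (n ∣ w) := by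
            rintro w q h1 h2 ⟨m, rfl⟩
            have e1 : q < m := lt_of_mul_lt_mul_left h1 hnpos.le
            have e2 : m < q + 1 := lt_of_mul_lt_mul_left (by linarith) hnpos.le
            omega
          have hup : ∀ (j : ℕ), ∀ α ∈ A, (∀ w : ℤ, α < w → w ≤ α + j → ¬ (n ∣ w)) → α + j ∈ A := by
            intro j
            induction j with
            | zero => intro α hα _; simpa using hα
            | succ m IH =>
                intro α hα hcond
                have h1 : α + m ∈ A := IH α hα (fun w hw1 hw2 => hcond w hw1 (by push_cast at hw2 ⊢; omega))
                have h2 : α + (m:ℤ) + 1 ∈ A :=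
                  Afwd (α + m) h1 (hcond (α + m + 1) (by push_cast; omega) (by push_cast; omega))
                have e : α + ((m+1 : ℕ) : ℤ) = α + (m:ℤ) + 1 := by push_cast; ring
                exact e ▸ h2
          have hdown : ∀ (j : ℕ), ∀ α ∈ A, (∀ w : ℤ, α - j < w → w ≤ α → ¬ (n ∣ w)) → α - j ∈ A := by
            intro j
            induction j with
            | zero => intro α hα _; simpa using hα
            | succ m IH =>
                intro α hα hcond
                have h1 : α - m ∈ A := IH α hα (fun w hw1 hw2 => hcond w (by push_cast at hw1 ⊢; omega) hw2)
                have h2 : α - (m:ℤ) - 1 ∈ A :=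
                  Aback (α - m) h1 (hcond (α - m) (by push_cast; omega) (by push_cast; omega))
                have e : α - ((m+1 : ℕ) : ℤ) = α - (m:ℤ) - 1 := by push_cast; ring
                exact e ▸ h2
          have hblock : ∀ α ∈ A, ∀ z : ℤ, n * (α / n) ≤ z → z < n * (α / n) + n → z ∈ A := by
            intro α hα z h1 h2
            have e1 : n * (α / n) + α % n = α := Int.mul_ediv_add_emod α n
            have e2 : 0 ≤ α % n := Int.emod_nonneg α (ne_of_gt hnpos)
            have e3 : α % n < n := Int.emod_lt_of_pos α hnpos
            rcases le_or_gt α z with h | h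
            · have hj : ((z - α).toNat : ℤ) = z - α := Int.toNat_of_nonneg (by omega)
              have h3 := hup (z - α).toNat α hα (fun w hw1 hw2 => hno w (α / n) (by omega) (by omega))
              have e : α + ((z - α).toNat : ℤ) = z := by omega
              exact e ▸ h3
            · have hj : ((α - z).toNat : ℤ) = α - z := Int.toNat_of_nonneg (by omega)
              have h3 := hdown (α - z).toNat α hα (fun w hw1 hw2 => hno w (α / n) (by omega) (by omega))
              have e : α - ((α - z).toNat : ℤ) = z := by omega
              exact e ▸ h3
          have hDdvd : n ∣ D := by
            obtain ⟨a', ha', t', ht', h'⟩ := hcover (D-1) (by omega) (by omega)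
            have h1 : n ∣ t' := Tdvd t' ht'
            have h2 : n ∣ (a' + 1) := by
              by_contra hnd
              have h3 := Afwd a' ha' hnd
              have h4 := hbound (a'+1) h3 t' ht'
              omega
            have e : D = (a' + 1) + t' := by omega
            rw [e]; exact dvd_add h2 h1
          -- quotient structures
          set A1 : Finset ℤ := (A.filter (fun a => n ∣ a)).image (fun a => a / n) with hA1def
          set T1 : Finset ℤ := T.image (fun t => t / n) with hT1def
          have hA1mem : ∀ m : ℤ, m ∈ A1 ↔ n * m ∈ A := by
            intro m
            constructor
            · intro hm
              rw [hA1def, Finset.mem_image] at hm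
              obtain ⟨α, hα, rfl⟩ := hm
              rw [Finset.mem_filter] at hα
              rw [Int.mul_ediv_cancel' hα.2]
              exact hα.1
            · intro hm
              rw [hA1def, Finset.mem_image]
              exact ⟨n*m, Finset.mem_filter.mpr ⟨hm, dvd_mul_right n m⟩,
                Int.mul_ediv_cancel_left m (ne_of_gt hnpos)⟩
          have hT1mem : ∀ m : ℤ, m ∈ T1 ↔ n * m ∈ T := by
            intro m
            constructor
            · intro hm
              rw [hT1def, Finset.mem_image] at hm
              obtain ⟨τ, hτ, rfl⟩ := hm
              rwa [Int.mul_ediv_cancel' (Tdvd τ hτ)]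
            · intro hm
              rw [hT1def, Finset.mem_image]
              exact ⟨n*m, hm, Int.mul_ediv_cancel_left m (ne_of_gt hnpos)⟩
          have hD1 : D = n * (D / n) := (Int.mul_ediv_cancel' hDdvd).symm
          have hcancel : ∀ u v : ℤ, n * u ≤ n * v → u ≤ v := fun u v h =>
            le_of_mul_le_mul_left h hnpos
          have hcancellt : ∀ u v : ℤ, n * u < n * v → u < v := fun u v h =>
            lt_of_mul_lt_mul_left h hnpos.le
          have hcard1 : A1.card ≤ M := by
            have hsub : A1.image (fun m => n * m) ⊆ A := by
              intro x hx
              rw [Finset.mem_image] at hx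
              obtain ⟨m, hm, rfl⟩ := hx
              exact (hA1mem m).1 hm
            have hone : (1:ℤ) ∈ A := hfirst 1 (by omega) (by omega)
            have honen : (1:ℤ) ∉ A1.image (fun m => n*m) := by
              rw [Finset.mem_image]
              rintro ⟨m, hm, he⟩
              have : n ∣ 1 := Dvd.intro m he
              have := Int.le_of_dvd one_pos this
              omega
            have hclt : A1.card < A.card := by
              have e : A1.card = (A1.image (fun m => n*m)).card :=
                (Finset.card_image_of_injective _ (mul_right_injective₀ (ne_of_gt hnpos))).symm
              rw [e]
              exact Finset.card_lt_card ⟨hsub, fun hsup => honen (hsup hone)⟩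
            omega
          obtain ⟨ℓ', hℓ'pos, B, hBadj, hBmem⟩ :=
            IHM A1 T1 (D / n) hcard1
              ⟨0, (hA1mem 0).2 (by simpa using h0A)⟩
              ⟨0, (hT1mem 0).2 (by simpa using h0T)⟩
              (fun m hm => by
                have h := hA0 (n*m) ((hA1mem m).1 hm)
                nlinarith)
              (fun m hm => by
                have h := hT0 (n*m) ((hT1mem m).1 hm)
                nlinarith)
              (fun m1 hm1 m2 hm2 => by
                have h := hbound (n*m1) ((hA1mem m1).1 hm1) (n*m2) ((hT1mem m2).1 hm2)
                have : n * (m1 + m2) < n * (D / n) := by rw [← hD1]; linarith [h]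
                exact hcancellt _ _ this)
              (fun z hz1 hz2 => by
                have hz3 : n * z < D := by rw [hD1]; exact mul_lt_mul_of_pos_left hz2 hnpos
                obtain ⟨α, hα, τ, hτ, h⟩ := hcover (n*z) (by positivity) hz3
                have hdτ : n ∣ τ := Tdvd τ hτ
                have hdα : n ∣ α := by
                  have e : α = n*z - τ := by omega
                  rw [e]; exact dvd_sub (dvd_mul_right n z) hdτ
                refine ⟨α / n, ?_, τ / n, ?_, ?_⟩
                · rw [hA1mem, Int.mul_ediv_cancel' hdα]; exact hα
                · rw [hT1mem, Int.mul_ediv_cancel' hdτ]; exact hτ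
                · have e : n * (α / n + τ / n) = n * z := by
                    rw [mul_add, Int.mul_ediv_cancel' hdα, Int.mul_ediv_cancel' hdτ, h]
                  exact mul_left_cancel₀ (ne_of_gt hnpos) e)
              (fun m1 hm1 m1' hm1' m2 hm2 m2' hm2' he => by
                have h := hpack (n*m1) ((hA1mem m1).1 hm1) (n*m1') ((hA1mem m1').1 hm1')
                  (n*m2) ((hT1mem m2).1 hm2) (n*m2') ((hT1mem m2').1 hm2')
                  (by rw [← mul_add, ← mul_add, he])
                constructor
                · exact mul_left_cancel₀ (ne_of_gt hnpos) h.1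
                · exact mul_left_cancel₀ (ne_of_gt hnpos) h.2)
          refine ⟨n * ℓ', mul_pos hnpos hℓ'pos, B, hBadj, ?_⟩
          intro z
          have e1 : n * (z / n) + z % n = z := Int.mul_ediv_add_emod z n
          have e2 : 0 ≤ z % n := Int.emod_nonneg z (ne_of_gt hnpos)
          have e3 : z % n < n := Int.emod_lt_of_pos z hnpos
          constructor
          · intro hz
            have hz0 : n * (z / n) ∈ A := hblock z hz (n * (z / n)) le_rfl (by omega)
            have h1 : z / n ∈ A1 := (hA1mem _).2 hz0
            obtain ⟨β, hβ, h2, h3⟩ := (hBmem (z/n)).1 h1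
            refine ⟨β, hβ, ?_, ?_⟩
            · have h4 : n * (ℓ' * β) ≤ n * (z/n) := mul_le_mul_of_nonneg_left h2 hnpos.le
              have h5 : n * ℓ' * β = n * (ℓ' * β) := by ring
              linarith
            · have h5 : z/n ≤ ℓ' * β + ℓ' - 1 := by omega
              have h6 : n * (z/n) ≤ n * (ℓ' * β + ℓ' - 1) := mul_le_mul_of_nonneg_left h5 hnpos.le
              have h7 : n * (ℓ' * β + ℓ' - 1) = n * ℓ' * β + n * ℓ' - n := by ring
              linarith
          · rintro ⟨β, hβ, h2, h3⟩
            have hq1 : ℓ' * β ≤ z / n := by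
              have h4 : (n * (ℓ' * β)) / n ≤ z / n := Int.ediv_le_ediv hnpos (by linarith [show n * (ℓ' * β) = n * ℓ' * β from by ring])
              rwa [Int.mul_ediv_cancel_left _ (ne_of_gt hnpos)] at h4
            have hq2 : z / n < ℓ' * β + ℓ' := by
              rw [Int.ediv_lt_iff_lt_mul hnpos]
              have e : (ℓ' * β + ℓ') * n = n * ℓ' * β + n * ℓ' := by ring
              omega
            have h1 : z / n ∈ A1 := (hBmem _).2 ⟨β, hβ, hq1, hq2⟩
            have h4 : n * (z/n) ∈ A := (hA1mem _).1 h1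
            have h5 : (n * (z/n)) / n = z / n := Int.mul_ediv_cancel_left _ (ne_of_gt hnpos)
            have h6 := hblock (n*(z/n)) h4 z
            rw [h5] at h6
            exact h6 (by omega) (by omega)
      · -- T = {0}
        have hTall : ∀ t ∈ T, t = 0 := by
          push_neg at hTpos
          intro τ h
          have h1 := hT0 τ h
          have h2 := hTpos τ h
          omega
        refine ⟨D, hD, {0}, ?_, ?_⟩
        · intro β hβ hc
          simp only [Finset.mem_singleton] at hβ hc
          omega
        · intro z
          simp only [Finset.mem_singleton]
          constructor
          · intro hz
            exact ⟨0, rfl, by simpa using hA0 z hz, by have := hbound z hz 0 h0T; omega⟩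
          · rintro ⟨β, rfl, h1, h2⟩
            obtain ⟨α, hα, τ, hτ, h⟩ := hcover z (by omega) (by omega)
            have := hTall τ hτ
            have e : α = z := by omega
            exact e ▸ hα

theorem null_diff_Icc' {p q c d : ℝ} (hpq : p < q)
    (h : volume (Set.Icc p q \ Set.Icc c d) = 0) : c ≤ p ∧ q ≤ d := by
  constructor
  · by_contra hc
    push_neg at hc
    have hsub : Set.Ico p (min c q) ⊆ Set.Icc p q \ Set.Icc c d := by
      intro x hx
      obtain ⟨h1, h2⟩ := hx
      refine ⟨⟨h1, le_of_lt (lt_of_lt_of_le h2 (min_le_right _ _))⟩, ?_⟩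
      intro hmem
      exact absurd hmem.1 (not_le.mpr (lt_of_lt_of_le h2 (min_le_left _ _)))
    have h2 := measure_mono_null hsub h
    rw [Real.volume_Ico, ENNReal.ofReal_eq_zero] at h2
    have : p < min c q := lt_min hc hpq
    linarith
  · by_contra hc
    push_neg at hc
    have hsub : Set.Ioc (max p d) q ⊆ Set.Icc p q \ Set.Icc c d := by
      intro x hx
      obtain ⟨h1, h2⟩ := hx
      refine ⟨⟨le_of_lt (lt_of_le_of_lt (le_max_left _ _) h1), h2⟩, ?_⟩
      intro hmem
      exact absurd hmem.2 (not_le.mpr (lt_of_le_of_lt (le_max_right _ _) h1))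
    have h2 := measure_mono_null hsub h
    rw [Real.volume_Ioc, ENNReal.ofReal_eq_zero] at h2
    have : max p d < q := max_lt hpq hc
    linarith

theorem null_inter_Icc' {p q p' q' : ℝ} (h1 : p < q) (h2 : p' < q')
    (h : volume (Set.Icc p q ∩ Set.Icc p' q') = 0) : q ≤ p' ∨ q' ≤ p := by
  by_contra hc
  push_neg at hc
  obtain ⟨hc1, hc2⟩ := hc
  have hsub : Set.Ioo (max p p') (min q q') ⊆ Set.Icc p q ∩ Set.Icc p' q' := by
    intro x hx
    obtain ⟨hx1, hx2⟩ := hx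
    exact ⟨⟨le_of_lt (lt_of_le_of_lt (le_max_left _ _) hx1),
            le_of_lt (lt_of_lt_of_le hx2 (min_le_left _ _))⟩,
           ⟨le_of_lt (lt_of_le_of_lt (le_max_right _ _) hx1),
            le_of_lt (lt_of_lt_of_le hx2 (min_le_right _ _))⟩⟩
  have h3 := measure_mono_null hsub h
  rw [Real.volume_Ioo, ENNReal.ofReal_eq_zero] at h3
  have : max p p' < min q q' := by
    rw [max_lt_iff]
    constructor <;> rw [lt_min_iff]
    · exact ⟨h1, hc2⟩
    · exact ⟨hc1, h2⟩
  linarith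

/-- If a finite union `P` of pairwise disjoint closed segments with integer endpoints tiles a
segment (up to measure zero) by finitely many translates, then all segments of `P` have the same
length and all gaps between consecutive segments are nonnegative integer multiples of it. -/
theorem segments_equal_length_of_tiling (k : ℕ) (hk : 0 < k) (a b : Fin k → ℤ)
    (hab : ∀ i, a i < b i)
    (hdisj : ∀ i j : Fin k, i ≠ j →
      Disjoint (Set.Icc (a i : ℝ) (b i)) (Set.Icc (a j : ℝ) (b j)))
    (P : Set ℝ) (hP : P = ⋃ i, Set.Icc (a i : ℝ) (b i))
    (s : ℕ) (hs : 0 < s) (t : Fin s → ℝ)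
    (hae : ∀ i j : Fin s, i ≠ j →
      volume (((fun x => x + t i) '' P) ∩ ((fun x => x + t j) '' P)) = 0)
    (c d : ℝ) (hcd : c < d)
    (hcover : volume (symmDiff (⋃ i, (fun x => x + t i) '' P) (Set.Icc c d)) = 0) :
    (∀ i j : Fin k, b i - a i = b j - a j) ∧
    ∀ i j : Fin k, (b i < a j ∧ ∀ l : Fin k, ¬ (b i < a l ∧ b l < a j)) →
      ∃ q : ℕ, a j - b i = (q : ℤ) * (b i - a i) := by
  classical
  set f : Fin k × Fin s → Set ℝ :=
    fun p => Set.Icc ((a p.1 : ℝ) + t p.2) ((b p.1 : ℝ) + t p.2) with hf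
  have hlt : ∀ p : Fin k × Fin s, (a p.1 : ℝ) + t p.2 < (b p.1 : ℝ) + t p.2 := by
    intro p
    have := hab p.1
    have : (a p.1 : ℝ) < (b p.1 : ℝ) := by exact_mod_cast this
    linarith
  have himg : ∀ m : Fin s, (fun x => x + t m) '' P
      = ⋃ i, Set.Icc ((a i : ℝ) + t m) ((b i : ℝ) + t m) := by
    intro m
    rw [hP, Set.image_iUnion]
    refine Set.iUnion_congr fun i => ?_
    exact Set.image_add_const_Icc (t m) _ _
  have hU : (⋃ m, (fun x => x + t m) '' P) = ⋃ p : Fin k × Fin s, f p := by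
    ext x
    simp only [himg, Set.mem_iUnion, hf]
    constructor
    · rintro ⟨m, i, h⟩; exact ⟨(i, m), h⟩
    · rintro ⟨⟨i, m⟩, h⟩; exact ⟨m, i, h⟩
  rw [hU] at hcover
  have hUd : volume ((⋃ p, f p) \ Set.Icc c d) = 0 := by
    refine measure_mono_null ?_ hcover
    rw [Set.symmDiff_def]
    exact Set.subset_union_left
  have hdU : volume (Set.Icc c d \ ⋃ p, f p) = 0 := by
    refine measure_mono_null ?_ hcover
    rw [Set.symmDiff_def]
    exact Set.subset_union_right
  have htile_sub : ∀ p : Fin k × Fin s,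
      c ≤ (a p.1 : ℝ) + t p.2 ∧ (b p.1 : ℝ) + t p.2 ≤ d := by
    intro p
    refine null_diff_Icc' (hlt p) (measure_mono_null ?_ hUd)
    exact Set.diff_subset_diff_left (Set.subset_iUnion f p)
  have hclosed : IsClosed (⋃ p, f p) :=
    isClosed_iUnion_of_finite fun p => isClosed_Icc
  have hIccU : Set.Icc c d ⊆ ⋃ p, f p := by
    have hIoo : Set.Ioo c d ⊆ ⋃ p, f p := by
      intro x hx
      by_contra hxU
      obtain ⟨ε, hε, hball⟩ := Metric.isOpen_iff.mp hclosed.isOpen_compl x hxU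
      set δ : ℝ := min ε (min (x - c) (d - x)) with hδ
      have hδpos : 0 < δ := by
        refine lt_min hε (lt_min ?_ ?_) <;> [linarith [hx.1]; linarith [hx.2]]
      have hsub : Set.Ioo (x - δ) (x + δ) ⊆ Set.Icc c d \ ⋃ p, f p := by
        intro y hy
        obtain ⟨hy1, hy2⟩ := hy
        have hδ1 : δ ≤ ε := min_le_left _ _
        have hδ2 : δ ≤ x - c := le_trans (min_le_right _ _) (min_le_left _ _)
        have hδ3 : δ ≤ d - x := le_trans (min_le_right _ _) (min_le_right _ _)
        refine ⟨⟨by linarith, by linarith⟩, ?_⟩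
        intro hyU
        have : y ∈ Metric.ball x ε := by
          rw [Real.ball_eq_Ioo]
          exact ⟨by linarith, by linarith⟩
        exact hball this hyU
      have h2 := measure_mono_null hsub hdU
      rw [Real.volume_Ioo, ENNReal.ofReal_eq_zero] at h2
      linarith
    intro x hx
    rw [← closure_Ioo (ne_of_lt hcd)] at hx
    exact hclosed.closure_subset_iff.mpr hIoo hx
  have hsep : ∀ p p' : Fin k × Fin s, p ≠ p' →
      (b p.1 : ℝ) + t p.2 ≤ (a p'.1 : ℝ) + t p'.2 ∨
      (b p'.1 : ℝ) + t p'.2 ≤ (a p.1 : ℝ) + t p.2 := by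
    intro p p' hne
    by_cases hm : p.2 = p'.2
    · have hij : p.1 ≠ p'.1 := fun h => hne (Prod.ext h hm)
      have hd := hdisj p.1 p'.1 hij
      have hint : (b p.1 : ℝ) < (a p'.1 : ℝ) ∨ (b p'.1 : ℝ) < (a p.1 : ℝ) := by
        by_contra hcon
        push_neg at hcon
        obtain ⟨hc1, hc2⟩ := hcon
        have hab1 : (a p.1 : ℝ) ≤ (b p.1 : ℝ) := le_of_lt (by exact_mod_cast hab p.1)
        have hab2 : (a p'.1 : ℝ) ≤ (b p'.1 : ℝ) := le_of_lt (by exact_mod_cast hab p'.1)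
        have hx1 : max (a p.1 : ℝ) (a p'.1 : ℝ) ∈ Set.Icc (a p.1 : ℝ) (b p.1 : ℝ) :=
          ⟨le_max_left _ _, max_le hab1 hc1⟩
        have hx2 : max (a p.1 : ℝ) (a p'.1 : ℝ) ∈ Set.Icc (a p'.1 : ℝ) (b p'.1 : ℝ) :=
          ⟨le_max_right _ _, max_le hc2 hab2⟩
        exact Set.disjoint_left.mp hd hx1 hx2
      rcases hint with h | h
      · left; rw [hm]; linarith
      · right; rw [← hm]; linarith
    · have hnull : volume (f p ∩ f p') = 0 := by
        refine measure_mono_null ?_ (hae p.2 p'.2 hm)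
        refine Set.inter_subset_inter ?_ ?_
        · rw [himg p.2]
          exact Set.subset_iUnion (fun i => Set.Icc ((a i : ℝ) + t p.2) ((b i : ℝ) + t p.2)) p.1
        · rw [himg p'.2]
          exact Set.subset_iUnion (fun i => Set.Icc ((a i : ℝ) + t p'.2) ((b i : ℝ) + t p'.2)) p'.1
      exact null_inter_Icc' (hlt p) (hlt p') hnull
  -- integrality of translations
  have hGall : ∀ m : Fin s, ∃ z : ℤ, t m = c + z := by
    by_contra hcon
    push_neg at hcon
    obtain ⟨m₁, hm₁⟩ := hcon
    set U1 : Set ℝ := ⋃ p : Fin k × Fin s, ⋃ (_ : ∃ z : ℤ, t p.2 = c + z), f p with hU1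
    set U2 : Set ℝ := ⋃ p : Fin k × Fin s, ⋃ (_ : ¬ ∃ z : ℤ, t p.2 = c + z), f p with hU2
    have hc1 : IsClosed U1 := by
      refine isClosed_iUnion_of_finite fun p => ?_
      by_cases h : ∃ z : ℤ, t p.2 = c + z
      · simp only [h, Set.iUnion_true]; exact isClosed_Icc
      · simp only [h, Set.iUnion_false]; exact isClosed_empty
    have hc2 : IsClosed U2 := by
      refine isClosed_iUnion_of_finite fun p => ?_
      by_cases h : ∃ z : ℤ, t p.2 = c + z
      · simp only [h, not_true, Set.iUnion_false]; exact isClosed_empty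
      · simp only [h, not_false_iff, Set.iUnion_true]; exact isClosed_Icc
    have hcup : Set.Icc c d ⊆ U1 ∪ U2 := by
      intro x hx
      obtain ⟨S, ⟨p, rfl⟩, hxp⟩ := hIccU hx
      by_cases h : ∃ z : ℤ, t p.2 = c + z
      · left; exact Set.mem_iUnion.mpr ⟨p, Set.mem_iUnion.mpr ⟨h, hxp⟩⟩
      · right; exact Set.mem_iUnion.mpr ⟨p, Set.mem_iUnion.mpr ⟨h, hxp⟩⟩
    have hdisj12 : ∀ x, x ∈ U1 → x ∈ U2 → False := by
      intro x hx1 hx2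
      obtain ⟨S, ⟨p, rfl⟩, hxp⟩ := hx1
      obtain ⟨hG, hxp⟩ := Set.mem_iUnion.mp hxp
      obtain ⟨S, ⟨p', rfl⟩, hxp'⟩ := hx2
      obtain ⟨hG', hxp'⟩ := Set.mem_iUnion.mp hxp'
      have hne : p ≠ p' := by rintro rfl; exact hG' hG
      obtain ⟨z, hz⟩ := hG
      rcases hsep p p' hne with h | h
      · have he : (b p.1 : ℝ) + t p.2 = (a p'.1 : ℝ) + t p'.2 := by
          have := hxp.2; have := hxp'.1; linarith
        exact hG' ⟨z + b p.1 - a p'.1, by push_cast; linarith⟩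
      · have he : (b p'.1 : ℝ) + t p'.2 = (a p.1 : ℝ) + t p.2 := by
          have := hxp.1; have := hxp'.2; linarith
        exact hG' ⟨z + a p.1 - b p'.1, by push_cast; linarith⟩
    -- c lies in U1
    have hcU1 : c ∈ U1 := by
      obtain ⟨S, ⟨p, rfl⟩, hxp⟩ := hIccU (Set.left_mem_Icc.mpr hcd.le)
      have h1 := (htile_sub p).1
      have h2 := hxp.1
      have he : (a p.1 : ℝ) + t p.2 = c := le_antisymm h2 h1
      exact Set.mem_iUnion.mpr ⟨p, Set.mem_iUnion.mpr ⟨⟨-(a p.1), by push_cast; linarith⟩, hxp⟩⟩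
    -- some tile of m₁ is in U2 ∩ Icc c d
    have hU2ne : (Set.Icc c d ∩ U2).Nonempty := by
      set i₁ : Fin k := ⟨0, hk⟩
      refine ⟨(a i₁ : ℝ) + t m₁, ⟨(htile_sub (i₁, m₁)).1, le_trans (hlt (i₁, m₁)).le (htile_sub (i₁, m₁)).2⟩, ?_⟩
      refine Set.mem_iUnion.mpr ⟨(i₁, m₁), Set.mem_iUnion.mpr ⟨?_, ⟨le_rfl, (hlt (i₁, m₁)).le⟩⟩⟩
      rintro ⟨z, hz⟩
      exact hm₁ z hz
    have hpre := (isPreconnected_closed_iff.mp isPreconnected_Icc) U1 U2 hc1 hc2 hcup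
      ⟨c, Set.left_mem_Icc.mpr hcd.le, hcU1⟩ hU2ne
    obtain ⟨x, _, hx1, hx2⟩ := hpre
    exact hdisj12 x hx1 hx2
  choose zt hzt using hGall
  obtain ⟨S, ⟨p₁, rfl⟩, hdp⟩ := hIccU (Set.right_mem_Icc.mpr hcd.le)
  set D : ℤ := b p₁.1 + zt p₁.2 with hDdef
  have hdeq : d = c + (D : ℝ) := by
    have h1 := (htile_sub p₁).2
    have h2 := hdp.2
    rw [hzt p₁.2] at h1 h2
    push_cast [hDdef]
    linarith
  have hkne : (Finset.univ : Finset (Fin k)).Nonempty := ⟨⟨0, hk⟩, Finset.mem_univ _⟩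
  set a0 : ℤ := (Finset.univ.image a).min' (hkne.image a) with ha0def
  obtain ⟨i0, -, ha0eq⟩ := Finset.mem_image.mp ((Finset.univ.image a).min'_mem (hkne.image a))
  have ha0eq : a i0 = a0 := ha0eq
  have ha0le : ∀ i, a0 ≤ a i := fun i =>
    Finset.min'_le _ _ (Finset.mem_image_of_mem a (Finset.mem_univ i))
  set A : Finset ℤ :=
    Finset.univ.biUnion (fun i : Fin k => Finset.Ico (a i - a0) (b i - a0)) with hAdef
  set T : Finset ℤ := Finset.univ.image (fun m : Fin s => zt m + a0) with hTdef
  have hAmem : ∀ w : ℤ, w ∈ A ↔ ∃ i, a i - a0 ≤ w ∧ w < b i - a0 := by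
    intro w
    simp [hAdef, Finset.mem_biUnion, Finset.mem_Ico]
  have hmem_real : ∀ (w : ℤ) (i : Fin k) (m : Fin s),
      (a i + zt m ≤ w ∧ w < b i + zt m) ↔ (c + (w : ℝ) + 1/2 ∈ f (i, m)) := by
    intro w i m
    rw [hf]
    simp only [Set.mem_Icc]
    rw [hzt m]
    constructor
    · rintro ⟨h1, h2⟩
      have g1 : ((a i + zt m : ℤ) : ℝ) ≤ (w : ℝ) := by exact_mod_cast h1
      have g2 : (w : ℝ) + 1 ≤ ((b i + zt m : ℤ) : ℝ) := by exact_mod_cast h2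
      push_cast at g1 g2
      constructor <;> [linarith; linarith]
    · rintro ⟨h1, h2⟩
      constructor
      · have g1 : ((a i + zt m : ℤ) : ℝ) < ((w + 1 : ℤ) : ℝ) := by push_cast; linarith
        have := Int.cast_lt.mp g1
        omega
      · have g2 : ((w : ℤ) : ℝ) < ((b i + zt m : ℤ) : ℝ) := by push_cast; linarith
        have := Int.cast_lt.mp g2
        omega
  have huniq : ∀ (w : ℤ) (i i' : Fin k) (m m' : Fin s),
      (a i + zt m ≤ w ∧ w < b i + zt m) → (a i' + zt m' ≤ w ∧ w < b i' + zt m') →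
      (i, m) = (i', m') := by
    intro w i i' m m' h h'
    by_contra hne
    rcases hsep (i, m) (i', m') hne with hq | hq
    · rw [hzt m, hzt m'] at hq
      have : ((b i + zt m : ℤ) : ℝ) ≤ ((a i' + zt m' : ℤ) : ℝ) := by push_cast; linarith
      have := Int.cast_le.mp this
      omega
    · rw [hzt m, hzt m'] at hq
      have : ((b i' + zt m' : ℤ) : ℝ) ≤ ((a i + zt m : ℤ) : ℝ) := by push_cast; linarith
      have := Int.cast_le.mp this
      omega
  have hcov : ∀ w : ℤ, 0 ≤ w → w < D → ∃ i m, a i + zt m ≤ w ∧ w < b i + zt m := by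
    intro w h0 h1
    have hx : c + (w : ℝ) + 1/2 ∈ Set.Icc c d := by
      constructor
      · have h2 : (0 : ℝ) ≤ (w : ℝ) := by exact_mod_cast h0
        linarith
      · rw [hdeq]
        have h2 : (w : ℝ) + 1 ≤ (D : ℝ) := by exact_mod_cast (by omega : w + 1 ≤ D)
        linarith
    obtain ⟨S, ⟨p, rfl⟩, hxp⟩ := hIccU hx
    exact ⟨p.1, p.2, (hmem_real w p.1 p.2).mpr hxp⟩
  have htb : ∀ (i : Fin k) (m : Fin s), 0 ≤ a i + zt m ∧ b i + zt m ≤ D := by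
    intro i m
    have h1 := (htile_sub (i, m)).1
    have h2 := (htile_sub (i, m)).2
    rw [hzt m] at h1 h2
    rw [hdeq] at h2
    constructor
    · have : ((0 : ℤ) : ℝ) ≤ ((a i + zt m : ℤ) : ℝ) := by push_cast; linarith
      exact_mod_cast this
    · have : ((b i + zt m : ℤ) : ℝ) ≤ ((D : ℤ) : ℝ) := by push_cast; linarith
      exact_mod_cast this
  obtain ⟨ℓ, hℓpos, B, hBadj, hBmem⟩ := intTiling A.card A T D le_rfl
    ⟨0, (hAmem 0).mpr ⟨i0, by omega, by have := hab i0; omega⟩⟩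
    ⟨zt ⟨0, hs⟩ + a0, Finset.mem_image_of_mem _ (Finset.mem_univ _)⟩
    (fun w hw => by
      obtain ⟨i, h1, h2⟩ := (hAmem w).mp hw
      have := ha0le i
      omega)
    (fun τ hτ => by
      obtain ⟨m, -, rfl⟩ := Finset.mem_image.mp hτ
      have := (htb i0 m).1
      omega)
    (fun α hα τ hτ => by
      obtain ⟨i, h1, h2⟩ := (hAmem α).mp hα
      obtain ⟨m, -, rfl⟩ := Finset.mem_image.mp hτ
      have := (htb i m).2
      omega)
    (fun w h0 h1 => by
      obtain ⟨i, m, h2, h3⟩ := hcov w h0 h1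
      exact ⟨w - (zt m + a0), (hAmem _).mpr ⟨i, by omega, by omega⟩,
        zt m + a0, Finset.mem_image_of_mem _ (Finset.mem_univ m), by ring⟩)
    (fun α hα α' hα' τ hτ τ' hτ' he => by
      obtain ⟨i, h1, h2⟩ := (hAmem α).mp hα
      obtain ⟨i', h1', h2'⟩ := (hAmem α').mp hα'
      obtain ⟨m, -, rfl⟩ := Finset.mem_image.mp hτ
      obtain ⟨m', -, rfl⟩ := Finset.mem_image.mp hτ'
      have hu := huniq (α + (zt m + a0)) i i' m m' ⟨by omega, by omega⟩ ⟨by omega, by omega⟩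
      have hm : m = m' := (Prod.ext_iff.mp hu).2
      subst hm
      exact ⟨by omega, rfl⟩)
  have hstruct : ∀ i, ∃ β ∈ B, a i - a0 = ℓ * β ∧ b i - a0 = ℓ * β + ℓ := by
    intro i
    have hnotq : b i - a0 ∉ A := by
      intro hmem
      obtain ⟨l, h1, h2⟩ := (hAmem _).mp hmem
      have hli : l = i := by
        by_contra hne
        have hd := hdisj l i hne
        have hx1 : ((b i : ℤ) : ℝ) ∈ Set.Icc (a l : ℝ) (b l : ℝ) :=
          ⟨by exact_mod_cast (by omega : a l ≤ b i), by exact_mod_cast (by omega : b i ≤ b l)⟩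
        have hx2 : ((b i : ℤ) : ℝ) ∈ Set.Icc (a i : ℝ) (b i : ℝ) :=
          ⟨by exact_mod_cast (hab i).le, le_rfl⟩
        exact Set.disjoint_left.mp hd hx1 hx2
      subst hli
      omega
    have hnotp : a i - a0 - 1 ∉ A := by
      intro hmem
      obtain ⟨l, h1, h2⟩ := (hAmem _).mp hmem
      have hli : l = i := by
        by_contra hne
        have hd := hdisj l i hne
        have hx1 : ((a i : ℤ) : ℝ) ∈ Set.Icc (a l : ℝ) (b l : ℝ) :=
          ⟨by exact_mod_cast (by omega : a l ≤ a i), by exact_mod_cast (by omega : a i ≤ b l)⟩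
        have hx2 : ((a i : ℤ) : ℝ) ∈ Set.Icc (a i : ℝ) (b i : ℝ) :=
          ⟨le_rfl, by exact_mod_cast (hab i).le⟩
        exact Set.disjoint_left.mp hd hx1 hx2
      subst hli
      omega
    have hpA : a i - a0 ∈ A := (hAmem _).mpr ⟨i, le_rfl, by have := hab i; omega⟩
    obtain ⟨β, hβ, h1, h2⟩ := (hBmem _).mp hpA
    have hpstart : a i - a0 = ℓ * β := by
      by_contra hne
      exact hnotp ((hBmem _).mpr ⟨β, hβ, by omega, by omega⟩)
    have hqend : b i - a0 = ℓ * β + ℓ := by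
      rcases lt_trichotomy (b i - a0) (ℓ * β + ℓ) with h | h | h
      · exact absurd ((hBmem _).mpr ⟨β, hβ, by have := hab i; omega, by omega⟩) hnotq
      · exact h
      · exfalso
        have hmid : ℓ * β + ℓ ∈ A := (hAmem _).mpr ⟨i, by omega, by omega⟩
        obtain ⟨β', hβ', g1, g2⟩ := (hBmem _).mp hmid
        have e1 : β' ≤ β + 1 := by
          have : ℓ * β' ≤ ℓ * (β + 1) := by linarith [g1]
          exact le_of_mul_le_mul_left this hℓpos
        have e2 : β < β' := by
          have : ℓ * β < ℓ * β' := by linarith [g2]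
          exact lt_of_mul_lt_mul_left this hℓpos.le
        have hβ'eq : β' = β + 1 := by omega
        exact hBadj β hβ (hβ'eq ▸ hβ')
    exact ⟨β, hβ, hpstart, hqend⟩
  constructor
  · intro i j
    obtain ⟨βi, -, hi1, hi2⟩ := hstruct i
    obtain ⟨βj, -, hj1, hj2⟩ := hstruct j
    omega
  · rintro i j ⟨hij, -⟩
    obtain ⟨βi, -, hi1, hi2⟩ := hstruct i
    obtain ⟨βj, -, hj1, hj2⟩ := hstruct j
    have hbi : b i - a i = ℓ := by omega
    have hgap : a j - b i = (βj - βi - 1) * ℓ := by linear_combination hj1 - hi2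
    have hge : 0 ≤ βj - βi - 1 := by
      by_contra hlt
      push_neg at hlt
      have h1 : (βj - βi - 1) * ℓ < 0 := mul_neg_of_neg_of_pos (by omega) hℓpos
      omega
    refine ⟨(βj - βi - 1).toNat, ?_⟩
    rw [hbi, Int.toNat_of_nonneg hge]
    linarith [hgap]
end

section
/- Let K ⊂ ℝ be a compact set. Then there is no family of real coefficients (a_k)_{k ∈ ℤ} such that ∑_{k ∈ ℤ} a_k · χ_K(x − k) = x for every x ∈ ℝ. (Since K is bounded, for each x only finitely many terms of the sum are nonzero, so the sum is well defined.) In other words, the characteristic function of a compact set cannot satisfy the Strang–Fix condition of order greater than zero. -/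
open MeasureTheory Metric Filter Set Pointwise

/-- The characteristic function of a compact set cannot satisfy the Strang–Fix condition of
order greater than zero: no combination of its integer translates equals `x`. -/
theorem no_strang_fix (K : Set ℝ) (hK : IsCompact K) :
    ¬ ∃ a : ℤ → ℝ, ∀ x : ℝ,
      (∑' k : ℤ, a k * Set.indicator K (fun _ => (1 : ℝ)) (x - k)) = x := by
  classical
  rintro ⟨a, ha⟩
  obtain ⟨M, hM⟩ := hK.isBounded.subset_closedBall 0
  have key : ∀ x : ℝ, ∃ F : Finset ℤ, x = ∑ k ∈ F, a k := by
    intro x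
    set F : Finset ℤ := (Finset.Icc ⌈x - M⌉ ⌊x + M⌋).filter (fun k => x - (k : ℝ) ∈ K) with hF
    have hs : (∑' k : ℤ, a k * Set.indicator K (fun _ => (1 : ℝ)) (x - k)) = ∑ k ∈ F, a k := by
      rw [tsum_eq_sum (s := F)
        (by
          intro k hk
          by_cases h : x - (k : ℝ) ∈ K
          · exfalso
            apply hk
            have hb : |x - (k : ℝ)| ≤ M := by
              have := hM h
              rwa [mem_closedBall, Real.dist_eq, sub_zero] at this
            rw [abs_le] at hb
            refine Finset.mem_filter.mpr ⟨Finset.mem_Icc.mpr ⟨?_, ?_⟩, h⟩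
            · rw [Int.ceil_le]; linarith [hb.2]
            · rw [Int.le_floor]; linarith [hb.1]
          · rw [Set.indicator_of_notMem h, mul_zero])]
      refine Finset.sum_congr rfl fun k hk => ?_
      rw [Set.indicator_of_mem (Finset.mem_filter.mp hk).2, mul_one]
    exact ⟨F, (ha x).symm.trans hs⟩
  have hc : (Set.univ : Set ℝ).Countable := by
    have hsub : (Set.univ : Set ℝ) ⊆ Set.range (fun F : Finset ℤ => ∑ k ∈ F, a k) := by
      intro x _
      obtain ⟨F, hF⟩ := key x
      exact ⟨F, hF.symm⟩
    exact (Set.countable_range _).mono hsub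
  exact Cardinal.not_countable_real hc
end
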